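/- arXiv:2604.00274 — 8 statements merged into one kernel-verified Lean document; each statement's English description precedes it below -/
import Mathlib

section
/- Consider the Λ-linear maps d₂ : P_⋆ → P₊ × P₋, v ↦ (t·v, −t·v), and d₁ : P₊ × P₋ → P_⋆, (u,w) ↦ u + w. Then d₂ is injective, the range of d₂ equals the kernel of d₁, and the range of d₁ equals I_⋆. Consequently 0 → P_⋆ → P₊ ⊕ P₋ → P_⋆ → S_⋆ → 0 is a projective resolution of length two of the simple module S_⋆ = P_⋆/I_⋆, which is one-dimensional over k. -/
/-!
A pair `(u, w)` lies in `ker d₁` exactly when `w = -u`; then `u ∈ P₊` and `-u ∈ P₋` put every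
coordinate of `u` in `m = t·R`, so `u = t·v` and `(u, w) = d₂ v`. Since `t` is a non-zero-divisor,
`d₂` is injective. The map `v ↦ v₀(0)` identifies `S_⋆` with `k`, and a `Λ`-module that is
one-dimensional over `k ⊆ Λ` is simple, its `Λ`-submodules being `k`-subspaces.
-/

set_option maxHeartbeats 1600000
set_option synthInstance.maxHeartbeats 400000

noncomputable section

variable (k : Type) [Field k]

/-- The maximal ideal `m = (t)` of `R = k⟦t⟧`. -/
def mIdeal : Ideal (PowerSeries k) :=
  Ideal.span {PowerSeries.X}

lemma X_mem_mIdeal : (PowerSeries.X : PowerSeries k) ∈ mIdeal k :=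
  Ideal.subset_span rfl

/-- The Gelfand order `Λ ⊆ M₃(k⟦t⟧)`: all matrices `A` with
`A₁₂, A₁₃, A₂₃, A₃₂ ∈ m`. -/
def gelfandOrder : Subalgebra k (Matrix (Fin 3) (Fin 3) (PowerSeries k)) where
  carrier := {A | A 0 1 ∈ mIdeal k ∧ A 0 2 ∈ mIdeal k ∧ A 1 2 ∈ mIdeal k ∧ A 2 1 ∈ mIdeal k}
  zero_mem' := ⟨zero_mem _, zero_mem _, zero_mem _, zero_mem _⟩
  one_mem' := by
    refine ⟨?_, ?_, ?_, ?_⟩ <;>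
    · rw [Matrix.one_apply_ne (by decide)]
      exact zero_mem _
  add_mem' := by
    rintro a b ⟨ha1, ha2, ha3, ha4⟩ ⟨hb1, hb2, hb3, hb4⟩
    exact ⟨add_mem ha1 hb1, add_mem ha2 hb2, add_mem ha3 hb3, add_mem ha4 hb4⟩
  mul_mem' := by
    rintro a b ⟨ha1, ha2, ha3, ha4⟩ ⟨hb1, hb2, hb3, hb4⟩
    refine ⟨?_, ?_, ?_, ?_⟩ <;>
      simp only [Set.mem_setOf_eq, Matrix.mul_apply, Fin.sum_univ_three]
    · exact add_mem (add_mem (Ideal.mul_mem_left _ _ hb1) (Ideal.mul_mem_right _ _ ha1))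
        (Ideal.mul_mem_left _ _ hb4)
    · exact add_mem (add_mem (Ideal.mul_mem_left _ _ hb2) (Ideal.mul_mem_left _ _ hb3))
        (Ideal.mul_mem_right _ _ ha2)
    · exact add_mem (add_mem (Ideal.mul_mem_left _ _ hb2) (Ideal.mul_mem_left _ _ hb3))
        (Ideal.mul_mem_right _ _ ha3)
    · exact add_mem (add_mem (Ideal.mul_mem_left _ _ hb1) (Ideal.mul_mem_right _ _ ha4))
        (Ideal.mul_mem_left _ _ hb4)
  algebraMap_mem' := by
    intro r
    refine ⟨?_, ?_, ?_, ?_⟩ <;>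
    · rw [Matrix.algebraMap_matrix_apply, if_neg (by decide)]
      exact zero_mem _

/-- The column space `R³` is a module over the matrix ring `M₃(k⟦t⟧)` via
matrix-vector multiplication; by restriction of scalars it becomes a left module over
every subalgebra of `M₃(k⟦t⟧)`, in particular over the Gelfand order. -/
instance : Module (Matrix (Fin 3) (Fin 3) (PowerSeries k)) (Fin 3 → PowerSeries k) where
  smul A v := A.mulVec v
  one_smul v := Matrix.one_mulVec v
  mul_smul A B v := (Matrix.mulVec_mulVec v A B).symm
  smul_zero A := Matrix.mulVec_zero A
  smul_add A u v := Matrix.mulVec_add A u v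
  add_smul A B v := Matrix.add_mulVec A B v
  zero_smul v := Matrix.zero_mulVec v

instance : IsScalarTower k (Matrix (Fin 3) (Fin 3) (PowerSeries k)) (Fin 3 → PowerSeries k) :=
  ⟨fun c M v => Matrix.smul_mulVec c M v⟩

instance : SMulCommClass (Matrix (Fin 3) (Fin 3) (PowerSeries k)) k (Fin 3 → PowerSeries k) :=
  ⟨fun M c v => Matrix.mulVec_smul M c v⟩

instance : SMulCommClass k (Matrix (Fin 3) (Fin 3) (PowerSeries k)) (Fin 3 → PowerSeries k) :=
  SMulCommClass.symm _ _ _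

instance (S : Subalgebra k (Matrix (Fin 3) (Fin 3) (PowerSeries k))) :
    IsScalarTower k (↥S) (Fin 3 → PowerSeries k) :=
  ⟨fun c A v => by
    show ((c • A : ↥S) : Matrix (Fin 3) (Fin 3) (PowerSeries k)) • v
        = c • ((A : Matrix (Fin 3) (Fin 3) (PowerSeries k)) • v)
    rw [Subalgebra.coe_smul]
    exact smul_assoc c (A : Matrix (Fin 3) (Fin 3) (PowerSeries k)) v⟩

instance (S : Subalgebra k (Matrix (Fin 3) (Fin 3) (PowerSeries k))) :
    SMulCommClass (↥S) k (Fin 3 → PowerSeries k) :=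
  ⟨fun A c v => by
    show (A : Matrix (Fin 3) (Fin 3) (PowerSeries k)) • (c • v)
        = c • ((A : Matrix (Fin 3) (Fin 3) (PowerSeries k)) • v)
    exact smul_comm _ c v⟩

instance (S : Subalgebra k (Matrix (Fin 3) (Fin 3) (PowerSeries k))) :
    SMulCommClass k (↥S) (Fin 3 → PowerSeries k) :=
  SMulCommClass.symm _ _ _

lemma subalg_smul_apply (S : Subalgebra k (Matrix (Fin 3) (Fin 3) (PowerSeries k)))
    (A : ↥S) (v : Fin 3 → PowerSeries k) (i : Fin 3) :
    (A • v) i = (A : Matrix (Fin 3) (Fin 3) (PowerSeries k)) i 0 * v 0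
      + (A : Matrix (Fin 3) (Fin 3) (PowerSeries k)) i 1 * v 1
      + (A : Matrix (Fin 3) (Fin 3) (PowerSeries k)) i 2 * v 2 := by
  show ((A : Matrix (Fin 3) (Fin 3) (PowerSeries k)).mulVec v) i = _
  simp [Matrix.mulVec, dotProduct, Fin.sum_univ_three]

lemma subalg_smul_comm_X (S : Subalgebra k (Matrix (Fin 3) (Fin 3) (PowerSeries k)))
    (A : ↥S) (x : PowerSeries k) (v : Fin 3 → PowerSeries k) :
    A • (x • v) = x • (A • v) := by
  show (A : Matrix (Fin 3) (Fin 3) (PowerSeries k)) • (x • v)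
      = x • ((A : Matrix (Fin 3) (Fin 3) (PowerSeries k)) • v)
  exact Matrix.mulVec_smul _ x v

/-- The column module `P₊ = m ⊕ R ⊕ m` of the Gelfand order. -/
def Pplus : Submodule (↥(gelfandOrder k)) (Fin 3 → PowerSeries k) where
  carrier := {v | v 0 ∈ mIdeal k ∧ v 2 ∈ mIdeal k}
  zero_mem' := ⟨zero_mem _, zero_mem _⟩
  add_mem' := fun h h' => ⟨add_mem h.1 h'.1, add_mem h.2 h'.2⟩
  smul_mem' := by
    rintro ⟨A, hA1, hA2, hA3, hA4⟩ v ⟨h0, h2⟩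
    constructor
    · rw [subalg_smul_apply]
      exact add_mem (add_mem (Ideal.mul_mem_left _ _ h0) (Ideal.mul_mem_right _ _ hA1))
        (Ideal.mul_mem_right _ _ hA2)
    · rw [subalg_smul_apply]
      exact add_mem (add_mem (Ideal.mul_mem_left _ _ h0) (Ideal.mul_mem_right _ _ hA4))
        (Ideal.mul_mem_left _ _ h2)

/-- The column module `P₋ = m ⊕ m ⊕ R` of the Gelfand order. -/
def Pminus : Submodule (↥(gelfandOrder k)) (Fin 3 → PowerSeries k) where
  carrier := {v | v 0 ∈ mIdeal k ∧ v 1 ∈ mIdeal k}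
  zero_mem' := ⟨zero_mem _, zero_mem _⟩
  add_mem' := fun h h' => ⟨add_mem h.1 h'.1, add_mem h.2 h'.2⟩
  smul_mem' := by
    rintro ⟨A, hA1, hA2, hA3, hA4⟩ v ⟨h0, h1⟩
    constructor
    · rw [subalg_smul_apply]
      exact add_mem (add_mem (Ideal.mul_mem_left _ _ h0) (Ideal.mul_mem_left _ _ h1))
        (Ideal.mul_mem_right _ _ hA2)
    · rw [subalg_smul_apply]
      exact add_mem (add_mem (Ideal.mul_mem_left _ _ h0) (Ideal.mul_mem_left _ _ h1))
        (Ideal.mul_mem_right _ _ hA3)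

/-- The module `I_⋆ = m ⊕ R ⊕ R`, a submodule of `P_⋆ = R³`. -/
def Istar : Submodule (↥(gelfandOrder k)) (Fin 3 → PowerSeries k) where
  carrier := {v | v 0 ∈ mIdeal k}
  zero_mem' := show (0 : PowerSeries k) ∈ mIdeal k from zero_mem _
  add_mem' := fun {a b} ha hb => by
    have ha' : a 0 ∈ mIdeal k := ha
    have hb' : b 0 ∈ mIdeal k := hb
    exact add_mem ha' hb'
  smul_mem' := by
    rintro ⟨A, hA1, hA2, hA3, hA4⟩ v h0
    rw [Set.mem_setOf_eq, subalg_smul_apply]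
    exact add_mem (add_mem (Ideal.mul_mem_left _ _ h0) (Ideal.mul_mem_right _ _ hA1))
      (Ideal.mul_mem_right _ _ hA2)

lemma X_smul_mem_mIdeal (x : PowerSeries k) : (PowerSeries.X : PowerSeries k) • x ∈ mIdeal k := by
  rw [smul_eq_mul]
  exact Ideal.mul_mem_right _ _ (X_mem_mIdeal k)

lemma X_smul_mem_Pplus (v : Fin 3 → PowerSeries k) :
    (PowerSeries.X : PowerSeries k) • v ∈ Pplus k :=
  ⟨by rw [Pi.smul_apply]; exact X_smul_mem_mIdeal k _,
   by rw [Pi.smul_apply]; exact X_smul_mem_mIdeal k _⟩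

lemma X_smul_mem_Pminus (v : Fin 3 → PowerSeries k) :
    (PowerSeries.X : PowerSeries k) • v ∈ Pminus k :=
  ⟨by rw [Pi.smul_apply]; exact X_smul_mem_mIdeal k _,
   by rw [Pi.smul_apply]; exact X_smul_mem_mIdeal k _⟩

lemma neg_X_smul_mem_Pminus (v : Fin 3 → PowerSeries k) :
    -((PowerSeries.X : PowerSeries k) • v) ∈ Pminus k :=
  ⟨by rw [Pi.neg_apply, Pi.smul_apply]; exact neg_mem (X_smul_mem_mIdeal k _),
   by rw [Pi.neg_apply, Pi.smul_apply]; exact neg_mem (X_smul_mem_mIdeal k _)⟩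

/-- Multiplication by `t`, as a `Λ`-linear map `P_⋆ = R³ → P₊` with range `t·R³`. -/
def tauPlus : (Fin 3 → PowerSeries k) →ₗ[↥(gelfandOrder k)] ↥(Pplus k) where
  toFun v := ⟨(PowerSeries.X : PowerSeries k) • v, X_smul_mem_Pplus k v⟩
  map_add' u v := Subtype.ext (smul_add _ u v)
  map_smul' A v := Subtype.ext (by
    show (PowerSeries.X : PowerSeries k) • (A • v) = A • ((PowerSeries.X : PowerSeries k) • v)
    exact (subalg_smul_comm_X k _ A _ v).symm)

/-- Multiplication by `t`, as a `Λ`-linear map `P_⋆ = R³ → P₋` with range `t·R³`. -/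
def tauMinus : (Fin 3 → PowerSeries k) →ₗ[↥(gelfandOrder k)] ↥(Pminus k) where
  toFun v := ⟨(PowerSeries.X : PowerSeries k) • v, X_smul_mem_Pminus k v⟩
  map_add' u v := Subtype.ext (smul_add _ u v)
  map_smul' A v := Subtype.ext (by
    show (PowerSeries.X : PowerSeries k) • (A • v) = A • ((PowerSeries.X : PowerSeries k) • v)
    exact (subalg_smul_comm_X k _ A _ v).symm)

/-- Multiplication by `−t`, as a `Λ`-linear map `P_⋆ = R³ → P₋`. -/
def tauMinusNeg : (Fin 3 → PowerSeries k) →ₗ[↥(gelfandOrder k)] ↥(Pminus k) where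
  toFun v := ⟨-((PowerSeries.X : PowerSeries k) • v), neg_X_smul_mem_Pminus k v⟩
  map_add' u v := Subtype.ext (by
    show -((PowerSeries.X : PowerSeries k) • (u + v))
        = -((PowerSeries.X : PowerSeries k) • u) + -((PowerSeries.X : PowerSeries k) • v)
    rw [smul_add, neg_add])
  map_smul' A v := Subtype.ext (by
    show -((PowerSeries.X : PowerSeries k) • (A • v))
        = A • -((PowerSeries.X : PowerSeries k) • v)
    rw [smul_neg, subalg_smul_comm_X k (gelfandOrder k) A (PowerSeries.X : PowerSeries k) v])

/-- The map `d₂ : P_⋆ → P₊ × P₋`, `v ↦ (t·v, −t·v)`. -/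
def dTwo : (Fin 3 → PowerSeries k) →ₗ[↥(gelfandOrder k)] ↥(Pplus k) × ↥(Pminus k) :=
  LinearMap.prod (tauPlus k) (tauMinusNeg k)

/-- The map `d₁ : P₊ × P₋ → P_⋆`, `(u, w) ↦ u + w`. -/
def dOne : (↥(Pplus k) × ↥(Pminus k)) →ₗ[↥(gelfandOrder k)] (Fin 3 → PowerSeries k) :=
  LinearMap.coprod (Pplus k).subtype (Pminus k).subtype

theorem exists_smul_eq_of_forall_mem_span_singleton {R ι : Type*} [CommSemiring R] {a : R}
    {u : ι → R} (h : ∀ i, u i ∈ Ideal.span {a}) : ∃ v : ι → R, a • v = u := by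
  choose v hv using fun i => Ideal.mem_span_singleton.mp (h i)
  exact ⟨v, funext fun i => (hv i).symm⟩

lemma mem_mIdeal_iff {x : PowerSeries k} : x ∈ mIdeal k ↔ PowerSeries.coeff 0 x = 0 := by
  rw [mIdeal, Ideal.mem_span_singleton, PowerSeries.X_dvd_iff,
    PowerSeries.coeff_zero_eq_constantCoeff_apply]

lemma mem_Istar_iff {v : Fin 3 → PowerSeries k} : v ∈ Istar k ↔ v 0 ∈ mIdeal k := Iff.rfl

@[simp]
lemma coe_dTwo_fst (v : Fin 3 → PowerSeries k) :
    ((dTwo k v).1 : Fin 3 → PowerSeries k) = (PowerSeries.X : PowerSeries k) • v := rfl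

@[simp]
lemma coe_dTwo_snd (v : Fin 3 → PowerSeries k) :
    ((dTwo k v).2 : Fin 3 → PowerSeries k) = -((PowerSeries.X : PowerSeries k) • v) := rfl

@[simp]
lemma dOne_apply (p : ↥(Pplus k) × ↥(Pminus k)) :
    dOne k p = (p.1 : Fin 3 → PowerSeries k) + (p.2 : Fin 3 → PowerSeries k) := rfl

lemma exists_X_smul_eq_of_mem_Pplus_of_mem_Pminus {u : Fin 3 → PowerSeries k}
    (hplus : u ∈ Pplus k) (hminus : u ∈ Pminus k) :
    ∃ v, (PowerSeries.X : PowerSeries k) • v = u := by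
  refine exists_smul_eq_of_forall_mem_span_singleton fun i => ?_
  fin_cases i
  exacts [hplus.1, hminus.2, hplus.2]

lemma dTwo_injective : Function.Injective (dTwo k) := fun _ _ h =>
  smul_right_injective _ PowerSeries.X_ne_zero (congrArg (fun p => (p.1 : Fin 3 → PowerSeries k)) h)

lemma range_dTwo_eq_ker_dOne : LinearMap.range (dTwo k) = LinearMap.ker (dOne k) := by
  ext p
  rw [LinearMap.mem_range, LinearMap.mem_ker, dOne_apply]
  constructor
  · rintro ⟨v, rfl⟩
    rw [coe_dTwo_fst, coe_dTwo_snd, add_neg_cancel]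
  · intro h
    have hw : (p.2 : Fin 3 → PowerSeries k) = -(p.1 : Fin 3 → PowerSeries k) := eq_neg_of_add_eq_zero_right h
    obtain ⟨v, hv⟩ := exists_X_smul_eq_of_mem_Pplus_of_mem_Pminus k p.1.2
      ((Pminus k).neg_mem_iff.mp (hw ▸ p.2.2))
    exact ⟨v, Prod.ext (Subtype.ext hv) (Subtype.ext (by rw [coe_dTwo_snd, hv, hw]))⟩

lemma range_dOne_eq_Istar : LinearMap.range (dOne k) = Istar k := by
  ext v
  constructor
  · rintro ⟨⟨u, w⟩, rfl⟩
    exact add_mem u.2.1 w.2.1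
  · intro hv
    refine ⟨(⟨![v 0, v 1, 0], by simpa using (mem_Istar_iff k).mp hv, by simp⟩,
      ⟨![0, 0, v 2], by simp, by simp⟩), ?_⟩
    ext i
    fin_cases i <;> simp

def coeffZeroFst : (Fin 3 → PowerSeries k) →ₗ[k] k :=
  PowerSeries.coeff 0 ∘ₗ LinearMap.proj 0

lemma ker_coeffZeroFst : LinearMap.ker (coeffZeroFst k) = (Istar k).restrictScalars k := by
  ext v
  exact (mem_mIdeal_iff k).symm

lemma coeffZeroFst_surjective : Function.Surjective (coeffZeroFst k) :=
  fun c => ⟨fun _ => PowerSeries.C c, by simp [coeffZeroFst]⟩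

def quotientIstarEquiv : ((Fin 3 → PowerSeries k) ⧸ Istar k) ≃ₗ[k] k :=
  (Submodule.Quotient.restrictScalarsEquiv k (Istar k)).symm ≪≫ₗ
    Submodule.quotEquivOfEq _ _ (ker_coeffZeroFst k).symm ≪≫ₗ
    (coeffZeroFst k).quotKerEquivOfSurjective (coeffZeroFst_surjective k)

lemma finrank_quotient_Istar : Module.finrank k ((Fin 3 → PowerSeries k) ⧸ Istar k) = 1 :=
  (quotientIstarEquiv k).finrank_eq.trans (Module.finrank_self k)

/-- `d₂ : P_⋆ → P₊ × P₋`, `v ↦ (t·v, −t·v)` is injective, its range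
is the kernel of `d₁ : P₊ × P₋ → P_⋆`, `(u,w) ↦ u + w`, and the range of `d₁` equals
`I_⋆`.  Consequently `0 → P_⋆ → P₊ ⊕ P₋ → P_⋆ → S_⋆ → 0` is a projective resolution of
length two of the simple module `S_⋆ = P_⋆/I_⋆`, which is one-dimensional over `k`. -/
theorem projective_resolution_of_Sstar :
    Function.Injective (dTwo k) ∧
    LinearMap.range (dTwo k) = LinearMap.ker (dOne k) ∧
    LinearMap.range (dOne k) = Istar k ∧
    IsSimpleModule (↥(gelfandOrder k)) ((Fin 3 → PowerSeries k) ⧸ Istar k) ∧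
    Module.finrank k ((Fin 3 → PowerSeries k) ⧸ Istar k) = 1 := by
  have hfinrank := finrank_quotient_Istar k
  exact ⟨dTwo_injective k, range_dTwo_eq_ker_dOne k, range_dOne_eq_Istar k,
    (isSimpleModule_iff _ _).mpr (is_simple_module_of_finrank_eq_one hfinrank), hfinrank⟩
end
end

section
/- Let P ∈ {P_⋆, P₊, P₋} be one of the indecomposable projective column modules of the Gelfand order Λ, and let L be a Λ-submodule of P such that the quotient P/L is finite-dimensional over k. Then either L = Λ·(tᵖ·e_a) for some standard basis column vector e_a of R³ (a ∈ {1,2,3}) and some p ∈ ℕ with tᵖ·e_a ∈ P, or L = Λ·(tᵖ·e₂) + Λ·(tᵖ·e₃) for some p ∈ ℕ with tᵖ·e₂, tᵖ·e₃ ∈ P. -/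
set_option maxHeartbeats 1600000
set_option synthInstance.maxHeartbeats 400000

noncomputable section

variable (k : Type) [Field k]

instance (p : Submodule (↥(gelfandOrder k)) (Fin 3 → PowerSeries k)) :
    HasQuotient (↥p) (Submodule (↥(gelfandOrder k)) ↥p) :=
  @Submodule.hasQuotient (gelfandOrder k) p _ _ _

instance (p : Submodule (↥(gelfandOrder k)) (Fin 3 → PowerSeries k)) :
    SMulCommClass (↥(gelfandOrder k)) k (↥p) :=
  ⟨fun A c x => Subtype.ext (smul_comm A c (x : Fin 3 → PowerSeries k))⟩

instance (p : Submodule (↥(gelfandOrder k)) (Fin 3 → PowerSeries k)) :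
    SMulCommClass (↥(gelfandOrder k)) k ((Fin 3 → PowerSeries k) ⧸ p) := by
  constructor
  intro A c x
  induction x using Submodule.Quotient.induction_on with
  | H z =>
    rw [← Submodule.Quotient.mk_smul, ← Submodule.Quotient.mk_smul,
      ← Submodule.Quotient.mk_smul, ← Submodule.Quotient.mk_smul, smul_comm]

/-!
Write `ε i j` (`gelfandExponent`) for the least `t`-adic valuation allowed in entry `(i, j)` of `Λ`.
Because `Λ` contains the diagonal idempotents, a `Λ`-submodule `N ⊆ R³` is the direct sum of its
coordinate ideals `{x | x • eᵢ ∈ N}`. For `N = L ⊆ P` with `P / L` finite-dimensional these ideals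
are nonzero (otherwise `g ↦ [g t eᵢ]` would embed `k[t]` into `P / L`), so `R` being a DVR gives
`N = {v | t ^ pᵢ ∣ vᵢ}` for some exponent vector `p`. The elements `t ^ ε i j • E i j` of `Λ` force
`pᵢ ≤ pⱼ + ε i j`, and the only solutions are the columns of `ε` shifted by some `q`, which are the
exponent vectors of `Λ (t ^ q eⱼ)`, and the minimum of the last two shifted columns, the exponent
vector of `Λ (t ^ q e₂) + Λ (t ^ q e₃)` (`e₂, e₃` are `Pi.single 1 1, Pi.single 2 1`).
-/

open PowerSeries (X)
open scoped Matrix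

lemma Polynomial.ker_ne_bot_of_isNoetherian {R V : Type*} [CommRing R] [Nontrivial R]
    [AddCommGroup V] [Module R V] [IsNoetherian R V] (f : Polynomial R →ₗ[R] V) :
    LinearMap.ker f ≠ ⊥ := fun h =>
  Polynomial.not_finite (Module.Finite.of_injective f (LinearMap.ker_eq_bot.1 h))

lemma Submodule.eq_span_of_map_subtype_eq {R M : Type*} [Semiring R] [AddCommMonoid M]
    [Module R M] {P : Submodule R M} {L : Submodule R P} {s : Set P}
    (h : L.map P.subtype = span R (Subtype.val '' s)) : L = span R s :=
  map_injective_of_injective P.injective_subtype (by rw [h, map_span]; rfl)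

def gelfandExponent : Matrix (Fin 3) (Fin 3) ℕ := !![0, 1, 1; 0, 0, 1; 0, 1, 0]

lemma gelfandExponent_self (i : Fin 3) : gelfandExponent i i = 0 := by
  fin_cases i <;> rfl

section

variable {k}

lemma X_pow_smul_single_one (q : ℕ) (j : Fin 3) :
    (X : PowerSeries k) ^ q • (Pi.single j 1 : Fin 3 → PowerSeries k) = Pi.single j (X ^ q) := by
  rw [← Pi.single_smul, smul_eq_mul, mul_one]

lemma mem_mIdeal_iff_X_dvd {x : PowerSeries k} : x ∈ mIdeal k ↔ X ∣ x :=
  Ideal.mem_span_singleton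

lemma mem_gelfandOrder_iff_X_pow_dvd {A : Matrix (Fin 3) (Fin 3) (PowerSeries k)} :
    A ∈ gelfandOrder k ↔ ∀ i j, X ^ gelfandExponent i j ∣ A i j := by
  change (A 0 1 ∈ mIdeal k ∧ A 0 2 ∈ mIdeal k ∧ A 1 2 ∈ mIdeal k ∧ A 2 1 ∈ mIdeal k) ↔ _
  simp only [mem_mIdeal_iff_X_dvd]
  constructor
  · rintro ⟨h01, h02, h12, h21⟩ i j
    fin_cases i <;> fin_cases j <;> simp [gelfandExponent, *]
  · intro h
    exact ⟨by simpa [gelfandExponent] using h 0 1, by simpa [gelfandExponent] using h 0 2,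
      by simpa [gelfandExponent] using h 1 2, by simpa [gelfandExponent] using h 2 1⟩

lemma gelfand_smul_eq_mulVec (A : gelfandOrder k) (v : Fin 3 → PowerSeries k) :
    A • v = (A : Matrix (Fin 3) (Fin 3) (PowerSeries k)) *ᵥ v :=
  rfl

lemma single_mem_gelfandOrder {i j : Fin 3} {r : PowerSeries k}
    (hr : X ^ gelfandExponent i j ∣ r) : Matrix.single i j r ∈ gelfandOrder k := by
  rw [mem_gelfandOrder_iff_X_pow_dvd]
  intro i' j'
  rw [Matrix.single_apply]
  split_ifs with h
  · obtain ⟨rfl, rfl⟩ := h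
    exact hr
  · exact dvd_zero _

variable {N : Submodule (gelfandOrder k) (Fin 3 → PowerSeries k)}

lemma single_mul_mem {i j : Fin 3} {r x : PowerSeries k} (hr : X ^ gelfandExponent i j ∣ r)
    (hx : Pi.single j x ∈ N) : Pi.single i (r * x) ∈ N := by
  have := N.smul_mem ⟨_, single_mem_gelfandOrder hr⟩ hx
  rwa [gelfand_smul_eq_mulVec, Matrix.single_mulVec, Pi.single_eq_same] at this

lemma single_mul_mem_self {i : Fin 3} (r : PowerSeries k) {x : PowerSeries k}
    (hx : Pi.single i x ∈ N) : Pi.single i (r * x) ∈ N :=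
  single_mul_mem (by rw [gelfandExponent_self, pow_zero]; exact one_dvd r) hx

lemma mem_iff_forall_single_mem {v : Fin 3 → PowerSeries k} :
    v ∈ N ↔ ∀ i, Pi.single i (v i) ∈ N := by
  refine ⟨fun hv i => ?_, fun h => Finset.univ_sum_single v ▸ N.sum_mem fun i _ => h i⟩
  have hE : Matrix.single i i 1 ∈ gelfandOrder k :=
    single_mem_gelfandOrder (by rw [gelfandExponent_self, pow_zero])
  have := N.smul_mem ⟨_, hE⟩ hv
  rwa [gelfand_smul_eq_mulVec, Matrix.single_mulVec, one_mul] at this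

variable (N) in
def coordIdeal (i : Fin 3) : Ideal (PowerSeries k) where
  carrier := {x | Pi.single i x ∈ N}
  zero_mem' := by simp
  add_mem' hx hy := by simpa [Pi.single_add] using N.add_mem hx hy
  smul_mem' r _ hx := by exact single_mul_mem_self r hx

variable (N) in
def HasExponents (p : Fin 3 → ℕ) : Prop :=
  ∀ v, v ∈ N ↔ ∀ i, (X : PowerSeries k) ^ p i ∣ v i

lemma HasExponents.ext {M : Submodule (gelfandOrder k) (Fin 3 → PowerSeries k)} {p : Fin 3 → ℕ}
    (hN : HasExponents N p) (hM : HasExponents M p) : N = M :=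
  Submodule.ext fun v => (hN v).trans (hM v).symm

lemma exists_hasExponents (hN : ∀ i, coordIdeal N i ≠ ⊥) : ∃ p, HasExponents N p := by
  choose p hp using fun i =>
    IsDiscreteValuationRing.ideal_eq_span_pow_irreducible (hN i) PowerSeries.X_irreducible
  refine ⟨p, fun v => mem_iff_forall_single_mem.trans (forall_congr' fun i => ?_)⟩
  change v i ∈ coordIdeal N i ↔ _
  rw [hp i, Ideal.mem_span_singleton]

lemma HasExponents.le_add {p : Fin 3 → ℕ} (hN : HasExponents N p) (i j : Fin 3) :
    p i ≤ p j + gelfandExponent i j := by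
  have hj : Pi.single j (X ^ p j) ∈ N := (hN _).2 fun l => by
    rcases eq_or_ne l j with rfl | hl
    · simp
    · simp [hl]
  have := (hN _).1 (single_mul_mem (dvd_refl (X ^ gelfandExponent i j)) hj) i
  rwa [Pi.single_eq_same, ← pow_add, add_comm,
    pow_dvd_pow_iff PowerSeries.X_prime.ne_zero PowerSeries.X_prime.not_isUnit] at this

lemma HasExponents.sup {M : Submodule (gelfandOrder k) (Fin 3 → PowerSeries k)} {p q : Fin 3 → ℕ}
    (hN : HasExponents N p) (hM : HasExponents M q) : HasExponents (N ⊔ M) (p ⊓ q) := by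
  intro v
  rw [Submodule.mem_sup]
  constructor
  · rintro ⟨a, ha, b, hb, rfl⟩ i
    exact dvd_add (dvd_trans (pow_dvd_pow _ inf_le_left) ((hN a).1 ha i))
      (dvd_trans (pow_dvd_pow _ inf_le_right) ((hM b).1 hb i))
  · intro hv
    refine ⟨fun i => if p i ≤ q i then v i else 0, (hN _).2 fun i => ?_,
      fun i => if p i ≤ q i then 0 else v i, (hM _).2 fun i => ?_, funext fun i => ?_⟩
    · split_ifs with h
      · simpa [h] using hv i
      · exact dvd_zero _
    · split_ifs with h
      · exact dvd_zero _
      · simpa [(lt_of_not_ge h).le] using hv i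
    · simp only [Pi.add_apply]
      split_ifs <;> simp

lemma hasExponents_span_singleton (j : Fin 3) (q : ℕ) :
    HasExponents (Submodule.span (gelfandOrder k) {(X : PowerSeries k) ^ q • Pi.single j 1})
      (fun i => q + gelfandExponent i j) := by
  intro v
  rw [Submodule.mem_span_singleton, X_pow_smul_single_one]
  constructor
  · rintro ⟨A, rfl⟩ i
    rw [gelfand_smul_eq_mulVec, Matrix.mulVec_single]
    simpa [pow_add, mul_comm] using
      mul_dvd_mul_left (X ^ q) (mem_gelfandOrder_iff_X_pow_dvd.1 A.2 i j)
  · intro hv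
    choose c hc using hv
    refine ⟨⟨Matrix.of fun i l => if l = j then X ^ gelfandExponent i j * c i else 0, ?_⟩, ?_⟩
    · refine mem_gelfandOrder_iff_X_pow_dvd.2 fun i l => ?_
      simp only [Matrix.of_apply]
      split_ifs with h
      · subst h; exact dvd_mul_right _ _
      · exact dvd_zero _
    · funext i
      simp only [gelfand_smul_eq_mulVec, Matrix.mulVec_single, MulOpposite.op_pow, Pi.smul_apply,
        Matrix.col_apply, Matrix.of_apply, if_pos, MulOpposite.smul_eq_mul_unop,
        MulOpposite.unop_pow, MulOpposite.unop_op, hc i, pow_add]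
      ring

lemma exponent_cases {p : Fin 3 → ℕ} (h : ∀ i j, p i ≤ p j + gelfandExponent i j) :
    (∃ j q, p = fun i => q + gelfandExponent i j) ∨
      ∃ q, p = (fun i => q + gelfandExponent i 1) ⊓ (fun i => q + gelfandExponent i 2) := by
  have h01 : p 0 ≤ p 1 + 1 := h 0 1
  have h02 : p 0 ≤ p 2 + 1 := h 0 2
  have h10 : p 1 ≤ p 0 := h 1 0
  have h20 : p 2 ≤ p 0 := h 2 0
  have h12 : p 1 ≤ p 2 + 1 := h 1 2
  have h21 : p 2 ≤ p 1 + 1 := h 2 1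
  obtain h | h | h := lt_trichotomy (p 1) (p 2)
  on_goal 2 => obtain h' | h' := eq_or_lt_of_le h10
  on_goal 1 => refine Or.inl ⟨1, p 1, ?_⟩
  on_goal 2 => refine Or.inl ⟨0, p 0, ?_⟩
  on_goal 3 => refine Or.inr ⟨p 1, ?_⟩
  on_goal 4 => refine Or.inl ⟨2, p 2, ?_⟩
  all_goals
    funext i
    fin_cases i <;>
      simp only [Fin.zero_eta, Fin.mk_one, Fin.reduceFinMk, Fin.isValue, gelfandExponent,
        Matrix.of_apply, Matrix.cons_val', Matrix.cons_val, Matrix.cons_val_fin_one,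
        Pi.inf_apply] <;>
      omega

lemma single_X_mem {P : Submodule (gelfandOrder k) (Fin 3 → PowerSeries k)}
    (hP : P ∈ ({⊤, Pplus k, Pminus k} :
      Set (Submodule (gelfandOrder k) (Fin 3 → PowerSeries k))))
    (i : Fin 3) : (Pi.single i X : Fin 3 → PowerSeries k) ∈ P := by
  have hm : ∀ l, (Pi.single i X : Fin 3 → PowerSeries k) l ∈ mIdeal k := fun l => by
    rcases eq_or_ne l i with rfl | hl
    · simpa using X_mem_mIdeal k
    · simp [hl]
  rcases hP with rfl | rfl | rfl
  · exact Submodule.mem_top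
  · exact ⟨hm 0, hm 2⟩
  · exact ⟨hm 0, hm 1⟩

lemma coordIdeal_map_subtype_ne_bot {P : Submodule (gelfandOrder k) (Fin 3 → PowerSeries k)}
    (hP : ∀ i, (Pi.single i X : Fin 3 → PowerSeries k) ∈ P) (L : Submodule (gelfandOrder k) P)
    [FiniteDimensional k (P ⧸ L)] (i : Fin 3) : coordIdeal (L.map P.subtype) i ≠ ⊥ := by
  have hmem (g : PowerSeries k) : Pi.single i (g * X) ∈ P := single_mul_mem_self g (hP i)
  let f : Polynomial k →ₗ[k] P ⧸ L :=
    { toFun g := Submodule.Quotient.mk ⟨Pi.single i ((g : PowerSeries k) * X), hmem g⟩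
      map_add' g h := by
        rw [← Submodule.Quotient.mk_add]
        congr 1
        ext1
        simp [add_mul, Pi.single_add]
      map_smul' c g := by
        rw [RingHom.id_apply, ← Submodule.Quotient.mk_smul]
        congr 1
        ext1
        simp [Polynomial.coe_smul, Pi.single_smul] }
  obtain ⟨g, hg, hg0⟩ := (Submodule.ne_bot_iff _).1 (Polynomial.ker_ne_bot_of_isNoetherian f)
  have hL : (Submodule.Quotient.mk (⟨_, hmem g⟩ : P) : P ⧸ L) = 0 := LinearMap.mem_ker.1 hg
  rw [Submodule.Quotient.mk_eq_zero] at hL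
  refine (Submodule.ne_bot_iff _).2 ⟨(g : PowerSeries k) * X, ⟨_, hL, rfl⟩, ?_⟩
  exact mul_ne_zero (by simpa using hg0) PowerSeries.X_prime.ne_zero

end

/-- Let `P ∈ {P_⋆, P₊, P₋}` be an indecomposable projective column
module of `Λ` and `L ⊆ P` a `Λ`-submodule with `P/L` finite-dimensional over `k`.
Then either `L = Λ·(tᵖ·e_a)` for a standard basis vector `e_a` and some `p ∈ ℕ` with
`tᵖ·e_a ∈ P`, or `L = Λ·(tᵖ·e₂) + Λ·(tᵖ·e₃)` for some `p ∈ ℕ` with `tᵖ·e₂, tᵖ·e₃ ∈ P`. -/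
theorem submodules_with_finite_dimensional_quotient :
    ∀ P ∈ ({⊤, Pplus k, Pminus k} :
        Set (Submodule (↥(gelfandOrder k)) (Fin 3 → PowerSeries k))),
    ∀ L : Submodule (↥(gelfandOrder k)) (↥P),
      FiniteDimensional k ((↥P) ⧸ L) →
      (∃ (a : Fin 3) (p : ℕ)
          (h : (PowerSeries.X : PowerSeries k) ^ p • (Pi.single a (1 : PowerSeries k) : Fin 3 → PowerSeries k) ∈ P),
          L = Submodule.span (↥(gelfandOrder k))
            {(⟨(PowerSeries.X : PowerSeries k) ^ p • (Pi.single a (1 : PowerSeries k) : Fin 3 → PowerSeries k), h⟩ : ↥P)}) ∨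
      (∃ (p : ℕ)
          (h₂ : (PowerSeries.X : PowerSeries k) ^ p • (Pi.single (1 : Fin 3) (1 : PowerSeries k) : Fin 3 → PowerSeries k) ∈ P)
          (h₃ : (PowerSeries.X : PowerSeries k) ^ p • (Pi.single (2 : Fin 3) (1 : PowerSeries k) : Fin 3 → PowerSeries k) ∈ P),
          L = Submodule.span (↥(gelfandOrder k))
            {(⟨(PowerSeries.X : PowerSeries k) ^ p • (Pi.single (1 : Fin 3) (1 : PowerSeries k) : Fin 3 → PowerSeries k), h₂⟩ : ↥P),
             (⟨(PowerSeries.X : PowerSeries k) ^ p • (Pi.single (2 : Fin 3) (1 : PowerSeries k) : Fin 3 → PowerSeries k), h₃⟩ : ↥P)}) := by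
  intro P hP L _
  have hNP : L.map P.subtype ≤ P := Submodule.map_subtype_le P L
  obtain ⟨p, hp⟩ := exists_hasExponents (coordIdeal_map_subtype_ne_bot (single_X_mem hP) L)
  rcases exponent_cases hp.le_add with ⟨j, q, rfl⟩ | ⟨q, rfl⟩
  · have hN := hp.ext (hasExponents_span_singleton j q)
    have hw := hNP (hN ▸ Submodule.mem_span_singleton_self _)
    exact Or.inl ⟨j, q, hw, Submodule.eq_span_of_map_subtype_eq (by rw [hN, Set.image_singleton])⟩
  · have hN := hp.ext ((hasExponents_span_singleton 1 q).sup (hasExponents_span_singleton 2 q))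
    rw [← Submodule.span_union, Set.singleton_union] at hN
    have hw₂ := hNP (hN ▸ Submodule.subset_span (Set.mem_insert _ _) :
      (X : PowerSeries k) ^ q • Pi.single 1 1 ∈ L.map P.subtype)
    have hw₃ := hNP (hN ▸ Submodule.subset_span (Set.mem_insert_of_mem _ rfl) :
      (X : PowerSeries k) ^ q • Pi.single 2 1 ∈ L.map P.subtype)
    exact Or.inr ⟨q, hw₂, hw₃, Submodule.eq_span_of_map_subtype_eq (by rw [hN, Set.image_pair])⟩
end
end

section
/- The Gelfand order Λ is self-opposite: there exists a k-algebra isomorphism ψ : Λ → Λᵒᵖ which fixes the diagonal matrix units E₁₁, E₂₂, E₃₃ and satisfies ψ(E₂₁) = t·E₁₂, ψ(t·E₁₂) = E₂₁, ψ(E₃₁) = t·E₁₃ and ψ(t·E₁₃) = E₃₁, the elements on the right being regarded in the opposite algebra Λᵒᵖ. -/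
set_option maxHeartbeats 1600000
set_option synthInstance.maxHeartbeats 400000

noncomputable section

variable (k : Type) [Field k]

/-- The matrix unit `E₁₁ ∈ Λ`. -/
def E11 : ↥(gelfandOrder k) :=
  ⟨Matrix.single 0 0 (1 : PowerSeries k), by
    refine ⟨?_, ?_, ?_, ?_⟩ <;>
    · rw [Matrix.single_apply_of_ne]; rotate_left; decide
      exact zero_mem _⟩

/-- The matrix unit `E₂₂ ∈ Λ`. -/
def E22 : ↥(gelfandOrder k) :=
  ⟨Matrix.single 1 1 (1 : PowerSeries k), by
    refine ⟨?_, ?_, ?_, ?_⟩ <;>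
    · rw [Matrix.single_apply_of_ne]; rotate_left; decide
      exact zero_mem _⟩

/-- The matrix unit `E₃₃ ∈ Λ`. -/
def E33 : ↥(gelfandOrder k) :=
  ⟨Matrix.single 2 2 (1 : PowerSeries k), by
    refine ⟨?_, ?_, ?_, ?_⟩ <;>
    · rw [Matrix.single_apply_of_ne]; rotate_left; decide
      exact zero_mem _⟩

/-- The matrix unit `E₂₁ ∈ Λ`. -/
def E21 : ↥(gelfandOrder k) :=
  ⟨Matrix.single 1 0 (1 : PowerSeries k), by
    refine ⟨?_, ?_, ?_, ?_⟩ <;>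
    · rw [Matrix.single_apply_of_ne]; rotate_left; decide
      exact zero_mem _⟩

/-- The matrix unit `E₃₁ ∈ Λ`. -/
def E31 : ↥(gelfandOrder k) :=
  ⟨Matrix.single 2 0 (1 : PowerSeries k), by
    refine ⟨?_, ?_, ?_, ?_⟩ <;>
    · rw [Matrix.single_apply_of_ne]; rotate_left; decide
      exact zero_mem _⟩

/-- The element `t·E₁₂ ∈ Λ`. -/
def tE12 : ↥(gelfandOrder k) :=
  ⟨Matrix.single 0 1 (PowerSeries.X : PowerSeries k), by
    refine ⟨?_, ?_, ?_, ?_⟩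
    · rw [Matrix.single_apply_same]
      exact X_mem_mIdeal k
    · rw [Matrix.single_apply_of_ne]; rotate_left; decide
      exact zero_mem _
    · rw [Matrix.single_apply_of_ne]; rotate_left; decide
      exact zero_mem _
    · rw [Matrix.single_apply_of_ne]; rotate_left; decide
      exact zero_mem _⟩

/-- The element `t·E₁₃ ∈ Λ`. -/
def tE13 : ↥(gelfandOrder k) :=
  ⟨Matrix.single 0 2 (PowerSeries.X : PowerSeries k), by
    refine ⟨?_, ?_, ?_, ?_⟩
    · rw [Matrix.single_apply_of_ne]; rotate_left; decide
      exact zero_mem _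
    · rw [Matrix.single_apply_same]
      exact X_mem_mIdeal k
    · rw [Matrix.single_apply_of_ne]; rotate_left; decide
      exact zero_mem _
    · rw [Matrix.single_apply_of_ne]; rotate_left; decide
      exact zero_mem _⟩

/-! With `D = diag(t, 1, 1)`, `ψ(A) = D Aᵀ D⁻¹` is an anti-automorphism of `M₃(k((t)))`. It keeps
the diagonal, exchanges `A₂₃` and `A₃₂`, and has `ψ(A)₁ⱼ = t Aⱼ₁`, `ψ(A)ⱼ₁ = A₁ⱼ / t` for
`j = 2, 3`; so `A₁₂, A₁₃ ∈ m` make `ψ(A)` integral, and then `ψ(A) ∈ Λ`. To stay inside `k⟦t⟧`, put `D' = t D⁻¹ = diag(1, t, t)`: then `t ψ(A) = D Aᵀ D'`, and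
each identity for `ψ` follows from the same identity for `A ↦ D Aᵀ D'` (which holds on all of
`M₃(k⟦t⟧)`, up to a power of `t`) by cancelling that power of `t`. -/

open Matrix PowerSeries

section TwistedTranspose

variable {R n : Type*} [CommRing R] [Fintype n] [DecidableEq n]

def twistedTranspose (d d' : n → R) : Matrix n n R →ₗ[R] Matrix n n R where
  toFun A := diagonal d * Aᵀ * diagonal d'
  map_add' A B := by rw [transpose_add, Matrix.mul_add, Matrix.add_mul]
  map_smul' c A := by rw [transpose_smul, Matrix.mul_smul, Matrix.smul_mul, RingHom.id_apply]

variable {t : R} {d d' : n → R}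

theorem twistedTranspose_apply (A : Matrix n n R) :
    twistedTranspose d d' A = diagonal d * Aᵀ * diagonal d' :=
  rfl

theorem diagonal_mul_diagonal_eq_smul_one (h : ∀ i, d i * d' i = t) :
    diagonal d * diagonal d' = t • (1 : Matrix n n R) := by
  rw [diagonal_mul_diagonal, smul_one_eq_diagonal]
  exact congrArg diagonal (funext h)

theorem twistedTranspose_mul_twistedTranspose (h : ∀ i, d i * d' i = t) (A B : Matrix n n R) :
    twistedTranspose d d' B * twistedTranspose d d' A = t • twistedTranspose d d' (A * B) := by
  have hd : diagonal d' * diagonal d = t • (1 : Matrix n n R) :=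
    diagonal_mul_diagonal_eq_smul_one fun i => (mul_comm _ _).trans (h i)
  simp only [twistedTranspose_apply, Matrix.mul_assoc, transpose_mul]
  rw [← Matrix.mul_assoc (diagonal d'), hd]
  simp

theorem twistedTranspose_twistedTranspose (h : ∀ i, d i * d' i = t) (A : Matrix n n R) :
    twistedTranspose d d' (twistedTranspose d d' A) = (t * t) • A := by
  simp only [twistedTranspose_apply, transpose_mul, diagonal_transpose, transpose_transpose,
    Matrix.mul_assoc]
  rw [← Matrix.mul_assoc (diagonal d'), ← Matrix.mul_assoc (diagonal d),
    ← Matrix.mul_assoc (diagonal d) (diagonal d'), diagonal_mul_diagonal_eq_smul_one h]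
  simp [smul_smul]

theorem twistedTranspose_smul_one {S : Type*} [CommSemiring S] [Algebra S R]
    (h : ∀ i, d i * d' i = t) (r : S) :
    twistedTranspose d d' (r • (1 : Matrix n n R)) = t • r • (1 : Matrix n n R) := by
  rw [twistedTranspose_apply, transpose_smul, transpose_one, Matrix.mul_smul, Matrix.mul_one,
    Matrix.smul_mul, diagonal_mul_diagonal_eq_smul_one h, smul_comm]

theorem twistedTranspose_single (i j : n) (c : R) :
    twistedTranspose d d' (single i j c) = single j i (d j * c * d' i) := by
  ext a b
  simp only [twistedTranspose_apply, transpose_single, diagonal_mul, mul_diagonal, single_apply]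
  split_ifs <;> simp_all

end TwistedTranspose

theorem Matrix.smul_left_cancel₀ {R m n : Type*} [Semiring R] [IsDomain R] {t : R} (ht : t ≠ 0)
    {M N : Matrix m n R} (h : t • M = t • N) : M = N :=
  (IsRegular.of_ne_zero ht).left.matrix h

section DivX

variable {R : Type*} [Semiring R]

def PowerSeries.divX (f : R⟦X⟧) : R⟦X⟧ :=
  mk fun n => coeff (n + 1) f

theorem PowerSeries.X_mul_divX {f : R⟦X⟧} (hf : constantCoeff f = 0) : X * divX f = f := by
  conv_rhs => rw [eq_X_mul_shift_add_const f, hf, map_zero, add_zero]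
  rfl

end DivX

section GelfandFlip

def gelfandFlip (A : Matrix (Fin 3) (Fin 3) k⟦X⟧) : Matrix (Fin 3) (Fin 3) k⟦X⟧ :=
  !![A 0 0, X * A 1 0, X * A 2 0;
     divX (A 0 1), A 1 1, A 2 1;
     divX (A 0 2), A 1 2, A 2 2]

def gelfandTwist : Matrix (Fin 3) (Fin 3) k⟦X⟧ →ₗ[k⟦X⟧] Matrix (Fin 3) (Fin 3) k⟦X⟧ :=
  twistedTranspose ![X, 1, 1] ![1, X, X]

variable {k}

theorem gelfandWeights_mul (i : Fin 3) : ![(X : k⟦X⟧), 1, 1] i * ![1, X, X] i = X := by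
  fin_cases i <;> simp

theorem constantCoeff_eq_zero_of_mem_mIdeal {f : k⟦X⟧} (hf : f ∈ mIdeal k) :
    constantCoeff f = 0 :=
  X_dvd_iff.mp (Ideal.mem_span_singleton.mp hf)

theorem gelfandFlip_mem {A : Matrix (Fin 3) (Fin 3) k⟦X⟧} (hA : A ∈ gelfandOrder k) :
    gelfandFlip k A ∈ gelfandOrder k := by
  obtain ⟨-, -, h12, h21⟩ := hA
  exact ⟨Ideal.mul_mem_right _ _ (X_mem_mIdeal k), Ideal.mul_mem_right _ _ (X_mem_mIdeal k),
    h21, h12⟩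

theorem X_smul_gelfandFlip {A : Matrix (Fin 3) (Fin 3) k⟦X⟧} (hA : A ∈ gelfandOrder k) :
    (X : k⟦X⟧) • gelfandFlip k A = gelfandTwist k A := by
  obtain ⟨h01, h02, -, -⟩ := hA
  have hdiv₁ := X_mul_divX (constantCoeff_eq_zero_of_mem_mIdeal h01)
  have hdiv₂ := X_mul_divX (constantCoeff_eq_zero_of_mem_mIdeal h02)
  ext i j
  fin_cases i <;> fin_cases j <;>
    simp [gelfandFlip, gelfandTwist, twistedTranspose_apply, diagonal_mul, mul_diagonal, hdiv₁,
      hdiv₂, mul_comm]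

theorem gelfandFlip_mul {A B : Matrix (Fin 3) (Fin 3) k⟦X⟧} (hA : A ∈ gelfandOrder k)
    (hB : B ∈ gelfandOrder k) : gelfandFlip k (A * B) = gelfandFlip k B * gelfandFlip k A := by
  refine smul_left_cancel₀ (mul_ne_zero X_ne_zero X_ne_zero) ?_
  calc (X * X) • gelfandFlip k (A * B)
      = X • gelfandTwist k (A * B) := by rw [mul_smul, X_smul_gelfandFlip (mul_mem hA hB)]
    _ = (X • gelfandFlip k B) * (X • gelfandFlip k A) := by
        rw [X_smul_gelfandFlip hA, X_smul_gelfandFlip hB, gelfandTwist,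
          twistedTranspose_mul_twistedTranspose gelfandWeights_mul]
    _ = (X * X) • (gelfandFlip k B * gelfandFlip k A) := smul_mul_smul_comm _ _ _ _

theorem gelfandFlip_add {A B : Matrix (Fin 3) (Fin 3) k⟦X⟧} (hA : A ∈ gelfandOrder k)
    (hB : B ∈ gelfandOrder k) : gelfandFlip k (A + B) = gelfandFlip k A + gelfandFlip k B := by
  refine smul_left_cancel₀ X_ne_zero ?_
  rw [smul_add, X_smul_gelfandFlip (add_mem hA hB), X_smul_gelfandFlip hA, X_smul_gelfandFlip hB,
    map_add]

theorem gelfandFlip_gelfandFlip {A : Matrix (Fin 3) (Fin 3) k⟦X⟧} (hA : A ∈ gelfandOrder k) :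
    gelfandFlip k (gelfandFlip k A) = A := by
  refine smul_left_cancel₀ (mul_ne_zero X_ne_zero X_ne_zero) ?_
  rw [mul_smul, X_smul_gelfandFlip (gelfandFlip_mem hA), ← map_smul, X_smul_gelfandFlip hA,
    gelfandTwist, twistedTranspose_twistedTranspose gelfandWeights_mul]

theorem gelfandFlip_algebraMap (r : k) :
    gelfandFlip k (algebraMap k _ r) = algebraMap k (Matrix (Fin 3) (Fin 3) k⟦X⟧) r := by
  refine smul_left_cancel₀ X_ne_zero ?_
  rw [X_smul_gelfandFlip (Subalgebra.algebraMap_mem _ r), Algebra.algebraMap_eq_smul_one,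
    gelfandTwist, twistedTranspose_smul_one gelfandWeights_mul]

theorem gelfandFlip_eq_single {A : gelfandOrder k} {i j : Fin 3} {c c' : k⟦X⟧}
    (hA : (A : Matrix (Fin 3) (Fin 3) k⟦X⟧) = single i j c)
    (hc : ![X, 1, 1] j * c * ![1, X, X] i = X * c') :
    gelfandFlip k A = single j i c' := by
  refine smul_left_cancel₀ X_ne_zero ?_
  rw [X_smul_gelfandFlip A.2, hA, gelfandTwist, twistedTranspose_single, hc, smul_single,
    smul_eq_mul]

end GelfandFlip

def gelfandAntiEquiv : gelfandOrder k ≃ₐ[k] (gelfandOrder k)ᵐᵒᵖ where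
  toFun A := .op ⟨gelfandFlip k A, gelfandFlip_mem A.2⟩
  invFun B := ⟨gelfandFlip k B.unop, gelfandFlip_mem B.unop.2⟩
  left_inv A := Subtype.ext (gelfandFlip_gelfandFlip A.2)
  right_inv B := MulOpposite.unop_injective (Subtype.ext (gelfandFlip_gelfandFlip B.unop.2))
  map_mul' A B := MulOpposite.unop_injective (Subtype.ext (gelfandFlip_mul A.2 B.2))
  map_add' A B := MulOpposite.unop_injective (Subtype.ext (gelfandFlip_add A.2 B.2))
  commutes' r := MulOpposite.unop_injective (Subtype.ext (gelfandFlip_algebraMap r))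

/-- The Gelfand order is self-opposite: there is a `k`-algebra
isomorphism `ψ : Λ → Λᵒᵖ` fixing the diagonal matrix units `E₁₁, E₂₂, E₃₃` and
satisfying `ψ(E₂₁) = t·E₁₂`, `ψ(t·E₁₂) = E₂₁`, `ψ(E₃₁) = t·E₁₃`, `ψ(t·E₁₃) = E₃₁`. -/
theorem gelfandOrder_self_opposite :
    ∃ ψ : (↥(gelfandOrder k)) ≃ₐ[k] (↥(gelfandOrder k))ᵐᵒᵖ,
      ψ (E11 k) = MulOpposite.op (E11 k) ∧
      ψ (E22 k) = MulOpposite.op (E22 k) ∧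
      ψ (E33 k) = MulOpposite.op (E33 k) ∧
      ψ (E21 k) = MulOpposite.op (tE12 k) ∧
      ψ (tE12 k) = MulOpposite.op (E21 k) ∧
      ψ (E31 k) = MulOpposite.op (tE13 k) ∧
      ψ (tE13 k) = MulOpposite.op (E31 k) := by
  refine ⟨gelfandAntiEquiv k, ?_, ?_, ?_, ?_, ?_, ?_, ?_⟩ <;>
    refine MulOpposite.unop_injective (Subtype.ext (gelfandFlip_eq_single rfl ?_)) <;>
    simp
end
end

section
/- For λ ≠ μ in k, the Gelfand-quiver representations M_λ and M_μ are not isomorphic: there is no triple (f₋, f_⋆, f₊) of invertible 2×2 matrices over k satisfying f_⋆B₊ = B₊f₊, f_⋆B₋ = B₋f₋, f₊A₊ = A₊f_⋆ and f₋A₋(λ) = A₋(μ)f_⋆. In particular (M_λ)_{λ∈k} is a family of pairwise non-isomorphic representations. -/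
set_option maxHeartbeats 1600000
set_option synthInstance.maxHeartbeats 400000

noncomputable section

variable (k : Type) [Field k]

/-- The matrix `B₊` of the representation `M_λ` of the Gelfand quiver. -/
def Bp : Matrix (Fin 2) (Fin 2) k := !![1, 0; 0, 0]

/-- The matrix `B₋` of the representation `M_λ` of the Gelfand quiver. -/
def Bm : Matrix (Fin 2) (Fin 2) k := !![0, 0; 1, 0]

/-- The matrix `A₊` of the representation `M_λ` of the Gelfand quiver. -/
def Ap : Matrix (Fin 2) (Fin 2) k := !![0, 0; 1, 1]

/-- The matrix `A₋(λ)` of the representation `M_λ` of the Gelfand quiver. -/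
def Am (lam : k) : Matrix (Fin 2) (Fin 2) k := !![0, 0; lam, 1]

/-! The relations with `B₊`, `B₋` and `A₊` force `f_⋆` to be a scalar `a`, whatever `λ`, `μ`.
Comparing bottom rows in `f₋ A₋(λ) = a A₋(μ)` then gives `a λ = a μ`, and `a ≠ 0` because `f_⋆`
is invertible. -/

section

variable {k}

theorem apply_one_zero_eq_zero_of_mul_Bp_eq {fs fp : Matrix (Fin 2) (Fin 2) k}
    (h : fs * Bp k = Bp k * fp) : fs 1 0 = 0 := by
  simpa [Bp, Matrix.mul_apply] using congrFun (congrFun h 1) 0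

theorem apply_zero_one_eq_zero_of_mul_Bm_eq {fs fm : Matrix (Fin 2) (Fin 2) k}
    (h : fs * Bm k = Bm k * fm) : fs 0 1 = 0 := by
  simpa [Bm, Matrix.mul_apply] using congrFun (congrFun h 0) 0

theorem add_apply_eq_of_mul_Ap_eq {fs fp : Matrix (Fin 2) (Fin 2) k}
    (h : fp * Ap k = Ap k * fs) : fs 0 0 + fs 1 0 = fs 0 1 + fs 1 1 := by
  have h10 : fp 1 1 = fs 0 0 + fs 1 0 := by
    simpa [Ap, Matrix.mul_apply] using congrFun (congrFun h 1) 0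
  have h11 : fp 1 1 = fs 0 1 + fs 1 1 := by
    simpa [Ap, Matrix.mul_apply] using congrFun (congrFun h 1) 1
  rw [← h10, ← h11]

theorem eq_scalar_of_intertwining {fm fs fp : Matrix (Fin 2) (Fin 2) k}
    (hBp : fs * Bp k = Bp k * fp) (hBm : fs * Bm k = Bm k * fm) (hAp : fp * Ap k = Ap k * fs) :
    fs = Matrix.scalar (Fin 2) (fs 0 0) := by
  have h10 := apply_one_zero_eq_zero_of_mul_Bp_eq hBp
  have h01 := apply_zero_one_eq_zero_of_mul_Bm_eq hBm
  have h11 : fs 1 1 = fs 0 0 := by simpa [h10, h01] using (add_apply_eq_of_mul_Ap_eq hAp).symm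
  ext i j
  fin_cases i <;> fin_cases j <;> simp [h10, h01, h11]

theorem mul_eq_mul_of_mul_Am_eq {fm : Matrix (Fin 2) (Fin 2) k} {lam mu a : k}
    (h : fm * Am k lam = Am k mu * Matrix.scalar (Fin 2) a) : a * lam = a * mu := by
  have h10 : fm 1 1 * lam = mu * a := by
    simpa [Am, Matrix.mul_apply] using congrFun (congrFun h 1) 0
  have h11 : fm 1 1 = a := by
    simpa [Am, Matrix.mul_apply] using congrFun (congrFun h 1) 1
  rw [← h11, h10, h11, mul_comm]

end

/-- For `λ ≠ μ` the representations `M_λ` and `M_μ` of the Gelfand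
quiver are not isomorphic: there is no triple `(f₋, f_⋆, f₊)` of invertible `2×2`
matrices with `f_⋆B₊ = B₊f₊`, `f_⋆B₋ = B₋f₋`, `f₊A₊ = A₊f_⋆`, `f₋A₋(λ) = A₋(μ)f_⋆`. -/
theorem Mlam_pairwise_nonisomorphic (lam mu : k) (hne : lam ≠ mu) :
    ¬∃ (fm fs fp : Matrix (Fin 2) (Fin 2) k),
      IsUnit fm ∧ IsUnit fs ∧ IsUnit fp ∧
      fs * Bp k = Bp k * fp ∧ fs * Bm k = Bm k * fm ∧
      fp * Ap k = Ap k * fs ∧ fm * Am k lam = Am k mu * fs := by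
  rintro ⟨fm, fs, fp, -, hs, -, hBp, hBm, hAp, hAm⟩
  have hscalar := eq_scalar_of_intertwining hBp hBm hAp
  have ha : fs 0 0 ≠ 0 := by
    intro h
    rw [h, map_zero] at hscalar
    exact not_isUnit_zero (hscalar ▸ hs)
  rw [hscalar] at hAm
  exact hne (mul_left_cancel₀ ha (mul_eq_mul_of_mul_Am_eq hAm))
end
end

section
/- For λ ∈ k, the representation M_λ is isomorphic to its reflection σ(M_λ) if and only if λ ≠ 0; explicitly, there exists a triple (g₋, g_⋆, g₊) of invertible 2×2 matrices over k satisfying g_⋆B₊ = B₋g₊, g_⋆B₋ = B₊g₋, g₊A₊ = A₋(λ)g_⋆ and g₋A₋(λ) = A₊g_⋆ if and only if λ ≠ 0. -/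
noncomputable section

variable (k : Type) [Field k]

/-!
If `(g₋, g_⋆, g₊)` is an isomorphism `M_λ ≅ σ(M_λ)`, then, since `A₊B₋ = B₋` and `A₋(λ)B₊ = λB₋`,
`g₊B₋ = g₊A₊B₋ = A₋(λ)g_⋆B₋ = A₋(λ)B₊g₋ = λB₋g₋`; for `λ = 0` this kills the nonzero matrix `B₋`
under the invertible `g₊`. For `λ ≠ 0`, `(1, [[0,1],[λ,0]], λ)` is an isomorphism.
-/

section

variable {k}

theorem Ap_mul_Bm : Ap k * Bm k = Bm k := by
  ext i j; fin_cases i <;> fin_cases j <;> simp [Ap, Bm]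

theorem Am_mul_Bp (lam : k) : Am k lam * Bp k = lam • Bm k := by
  ext i j; fin_cases i <;> fin_cases j <;> simp [Am, Bp, Bm]

theorem Bm_ne_zero : Bm k ≠ 0 := fun h => by
  simpa [Bm] using congrFun (congrFun h 1) 0

theorem mul_Bm_eq_smul_Bm_mul {lam : k} {gm gs gp : Matrix (Fin 2) (Fin 2) k}
    (hs : gs * Bm k = Bp k * gm) (hp : gp * Ap k = Am k lam * gs) :
    gp * Bm k = lam • (Bm k * gm) :=
  calc gp * Bm k = gp * Ap k * Bm k := by rw [Matrix.mul_assoc, Ap_mul_Bm]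
    _ = Am k lam * Bp k * gm := by rw [hp, Matrix.mul_assoc, hs, Matrix.mul_assoc]
    _ = lam • (Bm k * gm) := by rw [Am_mul_Bp, Matrix.smul_mul]

def starIso (lam : k) : Matrix (Fin 2) (Fin 2) k := !![0, 1; lam, 0]

theorem isUnit_starIso {lam : k} (h : lam ≠ 0) : IsUnit (starIso lam) := by
  simpa [Matrix.isUnit_iff_isUnit_det, starIso, Matrix.det_fin_two_of] using h

theorem starIso_mul_Bp (lam : k) : starIso lam * Bp k = lam • Bm k := by
  ext i j; fin_cases i <;> fin_cases j <;> simp [starIso, Bp, Bm]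

theorem starIso_mul_Bm (lam : k) : starIso lam * Bm k = Bp k := by
  ext i j; fin_cases i <;> fin_cases j <;> simp [starIso, Bp, Bm]

theorem Am_mul_starIso (lam : k) : Am k lam * starIso lam = lam • Ap k := by
  ext i j; fin_cases i <;> fin_cases j <;> simp [starIso, Am, Ap]

theorem Ap_mul_starIso (lam : k) : Ap k * starIso lam = Am k lam := by
  ext i j; fin_cases i <;> fin_cases j <;> simp [starIso, Am, Ap]

end

/-- `M_λ` is isomorphic to its reflection `σ(M_λ)` iff `λ ≠ 0`:
there is a triple `(g₋, g_⋆, g₊)` of invertible `2×2` matrices with `g_⋆B₊ = B₋g₊`,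
`g_⋆B₋ = B₊g₋`, `g₊A₊ = A₋(λ)g_⋆`, `g₋A₋(λ) = A₊g_⋆` iff `λ ≠ 0`. -/
theorem Mlam_isomorphic_to_reflection_iff (lam : k) :
    (∃ (gm gs gp : Matrix (Fin 2) (Fin 2) k),
      IsUnit gm ∧ IsUnit gs ∧ IsUnit gp ∧
      gs * Bp k = Bm k * gp ∧ gs * Bm k = Bp k * gm ∧
      gp * Ap k = Am k lam * gs ∧ gm * Am k lam = Ap k * gs) ↔ lam ≠ 0 := by
  constructor
  · rintro ⟨gm, gs, gp, -, -, hgp, -, hs, hp, -⟩ rfl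
    have hgpBm : gp * Bm k = 0 := by simpa using mul_Bm_eq_smul_Bm_mul hs hp
    exact Bm_ne_zero (hgp.mul_right_eq_zero.mp hgpBm)
  · intro hlam
    refine ⟨1, starIso lam, lam • 1, isUnit_one, isUnit_starIso hlam,
      by simpa [Algebra.algebraMap_eq_smul_one] using hlam.isUnit.map (algebraMap k _),
      ?_, ?_, ?_, ?_⟩
    · rw [starIso_mul_Bp, Matrix.mul_smul, Matrix.mul_one]
    · rw [starIso_mul_Bm, Matrix.mul_one]
    · rw [Am_mul_starIso, Matrix.smul_mul, Matrix.one_mul]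
    · rw [Ap_mul_starIso, Matrix.one_mul]
end
end

section
/- For every λ ∈ k, the set E_λ of endomorphism triples of M_λ — triples (f₋, f_⋆, f₊) of 2×2 matrices over k with f_⋆B₊ = B₊f₊, f_⋆B₋ = B₋f₋, f₊A₊ = A₊f_⋆ and f₋A₋(λ) = A₋(λ)f_⋆ — is a 3-dimensional k-subspace of M₂(k)³ closed under componentwise composition, and the componentwise product of any two endomorphism triples whose middle components f_⋆ are not invertible is the zero triple. Hence E_λ is a local k-algebra (isomorphic to k[φ,ψ]/(φ²,φψ,ψ²)) and M_λ is an indecomposable representation. -/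
/-!
Solving the four intertwining equations entrywise shows that every endomorphism triple is
`a • 1 + b • φ + c • ψ`, where `φ` and `ψ` put the nilpotent matrix `E₂₁` into the `V₋` and the
`V₊` slot respectively, and all products of `φ` and `ψ` vanish. So `E_λ = k ⊕ N` with
`N = span {φ, ψ}` and `N² = 0`. The middle component of such a triple is `a • 1`, and the triple is
a unit exactly when `a ≠ 0`; hence `E_λ` is local with maximal ideal `N`. Finally `X ↦ φ, Y ↦ ψ`
maps `k[X, Y]/(X², XY, Y²)`, which is spanned by `1, X, Y`, onto the basis `1, φ, ψ`, hence
isomorphically.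
-/

set_option maxHeartbeats 1600000
set_option synthInstance.maxHeartbeats 400000

noncomputable section

variable (k : Type) [Field k]

/-- The set of endomorphism triples of `M_λ`: triples `(f₋, f_⋆, f₊)` of `2×2` matrices
with `f_⋆B₊ = B₊f₊`, `f_⋆B₋ = B₋f₋`, `f₊A₊ = A₊f_⋆` and `f₋A₋(λ) = A₋(λ)f_⋆`,
as a subalgebra of `M₂(k)³` with componentwise operations. -/
def endTriples (lam : k) : Subalgebra k
    (Matrix (Fin 2) (Fin 2) k × Matrix (Fin 2) (Fin 2) k × Matrix (Fin 2) (Fin 2) k) where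
  carrier := {f | f.2.1 * Bp k = Bp k * f.2.2 ∧ f.2.1 * Bm k = Bm k * f.1 ∧
    f.2.2 * Ap k = Ap k * f.2.1 ∧ f.1 * Am k lam = Am k lam * f.2.1}
  zero_mem' := by
    refine ⟨?_, ?_, ?_, ?_⟩ <;> simp
  one_mem' := by
    refine ⟨?_, ?_, ?_, ?_⟩ <;> simp
  add_mem' := by
    rintro a b ⟨ha1, ha2, ha3, ha4⟩ ⟨hb1, hb2, hb3, hb4⟩
    refine ⟨?_, ?_, ?_, ?_⟩ <;>
      simp only [Prod.fst_add, Prod.snd_add, add_mul, mul_add]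
    · rw [ha1, hb1]
    · rw [ha2, hb2]
    · rw [ha3, hb3]
    · rw [ha4, hb4]
  mul_mem' := by
    rintro a b ⟨ha1, ha2, ha3, ha4⟩ ⟨hb1, hb2, hb3, hb4⟩
    refine ⟨?_, ?_, ?_, ?_⟩ <;> simp only [Prod.fst_mul, Prod.snd_mul]
    · rw [mul_assoc, hb1, ← mul_assoc, ha1, mul_assoc]
    · rw [mul_assoc, hb2, ← mul_assoc, ha2, mul_assoc]
    · rw [mul_assoc, hb3, ← mul_assoc, ha3, mul_assoc]
    · rw [mul_assoc, hb4, ← mul_assoc, ha4, mul_assoc]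
  algebraMap_mem' := fun c =>
    ⟨Algebra.commutes c _, Algebra.commutes c _, Algebra.commutes c _, Algebra.commutes c _⟩

section

variable {R A : Type*} [CommSemiring R] [Semiring A] [Algebra R A]

theorem Submodule.mul_eq_zero_of_mem_span {s : Set A} (hs : ∀ x ∈ s, ∀ y ∈ s, x * y = 0)
    {x y : A} (hx : x ∈ Submodule.span R s) (hy : y ∈ Submodule.span R s) : x * y = 0 := by
  have hxy := Submodule.mul_mem_mul hx hy
  rwa [Submodule.span_mul_span, Submodule.span_eq_bot.2, Submodule.mem_bot] at hxy
  rintro _ ⟨a, ha, b, hb, rfl⟩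
  exact hs a ha b hb

theorem Algebra.adjoin_eq_span_insert_one_of_mul_eq_zero {s : Set A}
    (hs : ∀ x ∈ s, ∀ y ∈ s, x * y = 0) :
    Subalgebra.toSubmodule (Algebra.adjoin R s) = Submodule.span R (insert 1 s) := by
  refine le_antisymm ?_ <| Submodule.span_le.2 <|
    Set.insert_subset (Subalgebra.one_mem _) Algebra.subset_adjoin
  rw [Algebra.adjoin_eq_span, Submodule.span_le]
  intro x hx
  have hx' : x = 0 ∨ x ∈ insert 1 s := by
    induction hx using Submonoid.closure_induction with
    | mem x hx => exact Or.inr (Set.mem_insert_of_mem _ hx)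
    | one => exact Or.inr (Set.mem_insert _ _)
    | mul x y _ _ hx hy =>
      rcases hx with rfl | rfl | hx
      · simp
      · simpa using hy
      rcases hy with rfl | rfl | hy
      · simp
      · simp [hx]
      · exact Or.inl (hs x hx y hy)
  rcases hx' with rfl | hx'
  · exact zero_mem _
  · exact Submodule.subset_span hx'

end

theorem IsLocalRing.of_isNilpotent_sub_algebraMap {K A : Type*} [Field K] [Ring A] [Algebra K A]
    [Nontrivial A] (h : ∀ x : A, ∃ a : K, IsNilpotent (x - algebraMap K A a)) :
    IsLocalRing A := by
  refine .of_isUnit_or_isUnit_one_sub_self fun x => ?_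
  obtain ⟨a, hn⟩ := h x
  rcases eq_or_ne a 0 with rfl | ha
  · right
    simpa using hn.isUnit_one_sub
  · left
    simpa using hn.isUnit_add_left_of_commute ((Ne.isUnit ha).map (algebraMap K A))
      (Algebra.commute_algebraMap_right a _)

theorem IsLocalRing.eq_zero_or_eq_one_of_isIdempotentElem {R : Type*} [Ring R] [IsLocalRing R]
    {e : R} (he : IsIdempotentElem e) : e = 0 ∨ e = 1 := by
  rcases IsLocalRing.isUnit_or_isUnit_of_add_one (add_sub_cancel e 1) with h | h
  · exact Or.inr ((IsIdempotentElem.iff_eq_one_of_isUnit h).1 he)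
  · exact Or.inl (sub_eq_self.1 ((IsIdempotentElem.iff_eq_one_of_isUnit h).1 he.one_sub))

open MvPolynomial

abbrev degTwoIdeal (R : Type*) [CommSemiring R] : Ideal (MvPolynomial (Fin 2) R) :=
  Ideal.span {X 0 ^ 2, X 0 * X 1, X 1 ^ 2}

section

variable {R : Type*} [CommRing R]

theorem span_range_degTwoIdeal_quotient_eq_top :
    Submodule.span R (Set.range ![(1 : MvPolynomial (Fin 2) R ⧸ degTwoIdeal R),
      Ideal.Quotient.mk _ (X 0), Ideal.Quotient.mk _ (X 1)]) = ⊤ := by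
  have hX : ![Ideal.Quotient.mk (degTwoIdeal R) (X 0), Ideal.Quotient.mk _ (X 1)] =
      Ideal.Quotient.mkₐ R (degTwoIdeal R) ∘ X := by
    ext i
    fin_cases i <;> rfl
  have hadj : Algebra.adjoin R (Set.range (Ideal.Quotient.mkₐ R (degTwoIdeal R) ∘ X)) = ⊤ := by
    rw [Set.range_comp, Algebra.adjoin_image, adjoin_range_X, Algebra.map_top, AlgHom.range_eq_top]
    exact Ideal.Quotient.mkₐ_surjective R _
  have hmul : ∀ x ∈ Set.range (Ideal.Quotient.mkₐ R (degTwoIdeal R) ∘ X),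
      ∀ y ∈ Set.range (Ideal.Quotient.mkₐ R (degTwoIdeal R) ∘ X), x * y = 0 := by
    rintro _ ⟨i, rfl⟩ _ ⟨j, rfl⟩
    rw [Function.comp_apply, Function.comp_apply, ← map_mul, Ideal.Quotient.mkₐ_eq_mk,
      Ideal.Quotient.eq_zero_iff_mem]
    fin_cases i <;> fin_cases j <;> exact Ideal.subset_span (by simp [sq, mul_comm])
  rw [Matrix.range_cons, hX, Set.singleton_union,
    ← Algebra.adjoin_eq_span_insert_one_of_mul_eq_zero hmul, hadj, Algebra.top_toSubmodule]

end

namespace endTriples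

variable {k} {lam : k}

local notation "M₂" => Matrix (Fin 2) (Fin 2) k

def phi (lam : k) : endTriples k lam :=
  ⟨(!![0, 0; 1, 0], 0, 0), by
    simp [endTriples, Bp, Bm, Ap, Am, ← Matrix.ext_iff, Fin.forall_fin_two]⟩

def psi (lam : k) : endTriples k lam :=
  ⟨(0, 0, !![0, 0; 1, 0]), by
    simp [endTriples, Bp, Bm, Ap, Am, ← Matrix.ext_iff, Fin.forall_fin_two]⟩

theorem mul_eq_zero_of_mem_pair {x y : endTriples k lam} (hx : x ∈ ({phi lam, psi lam} : Set _))
    (hy : y ∈ ({phi lam, psi lam} : Set _)) : x * y = 0 := by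
  rcases hx with rfl | rfl <;> rcases hy with rfl | rfl <;>
    ext : 1 <;> simp [phi, psi, Prod.ext_iff, ← Matrix.ext_iff, Fin.forall_fin_two]

theorem mul_eq_zero_of_mem_span {x y : endTriples k lam}
    (hx : x ∈ Submodule.span k {phi lam, psi lam}) (hy : y ∈ Submodule.span k {phi lam, psi lam}) :
    x * y = 0 :=
  Submodule.mul_eq_zero_of_mem_span (fun _ hx _ hy => mul_eq_zero_of_mem_pair hx hy) hx hy

theorem eq_smul_one_add (f : endTriples k lam) :
    f = (f : M₂ × M₂ × M₂).2.1 0 0 • 1 +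
      ((f : M₂ × M₂ × M₂).1 1 0 • phi lam + (f : M₂ × M₂ × M₂).2.2 1 0 • psi lam) := by
  obtain ⟨⟨m, s, p⟩, h₁, h₂, h₃, h₄⟩ := f
  simp only [Bp, Bm, Ap, Am, phi, psi, Subtype.ext_iff, AddMemClass.coe_add, SetLike.val_smul,
    OneMemClass.coe_one, Prod.ext_iff, Prod.fst_add, Prod.snd_add, Prod.smul_fst, Prod.smul_snd,
    Prod.fst_one, Prod.snd_one, ← Matrix.ext_iff, Fin.forall_fin_two,
    Matrix.mul_apply, Fin.sum_univ_two, Matrix.add_apply, Matrix.smul_apply, Matrix.one_fin_two,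
    Matrix.zero_apply, Matrix.of_apply, Matrix.cons_val', Matrix.cons_val_zero, Matrix.cons_val_one,
    Matrix.cons_val_fin_one, smul_eq_mul] at h₁ h₂ h₃ h₄ ⊢
  grind

theorem sub_algebraMap_mem_span (f : endTriples k lam) :
    f - algebraMap k _ ((f : M₂ × M₂ × M₂).2.1 0 0) ∈ Submodule.span k {phi lam, psi lam} := by
  refine Submodule.mem_span_pair.2 ⟨(f : M₂ × M₂ × M₂).1 1 0, (f : M₂ × M₂ × M₂).2.2 1 0, ?_⟩
  rw [Algebra.algebraMap_eq_smul_one, eq_sub_iff_add_eq']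
  exact (eq_smul_one_add f).symm

theorem mem_span_of_not_isUnit {f : endTriples k lam} (hf : ¬IsUnit (f : M₂ × M₂ × M₂).2.1) :
    f ∈ Submodule.span k {phi lam, psi lam} := by
  have hscalar : (f : M₂ × M₂ × M₂).2.1 = algebraMap k _ ((f : M₂ × M₂ × M₂).2.1 0 0) := by
    conv_lhs => rw [eq_smul_one_add f]
    simp [phi, psi, Algebra.algebraMap_eq_smul_one]
  have ha : (f : M₂ × M₂ × M₂).2.1 0 0 = 0 := by
    contrapose! hf
    exact hscalar ▸ (Ne.isUnit hf).map _
  simpa [ha] using sub_algebraMap_mem_span f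

theorem isNilpotent_sub_algebraMap (f : endTriples k lam) :
    IsNilpotent (f - algebraMap k _ ((f : M₂ × M₂ × M₂).2.1 0 0)) :=
  ⟨2, (pow_two _).trans
    (mul_eq_zero_of_mem_span (sub_algebraMap_mem_span f) (sub_algebraMap_mem_span f))⟩

theorem linearIndependent : LinearIndependent k ![1, phi lam, psi lam] := by
  refine Fintype.linearIndependent_iff.2 fun g hg i => ?_
  have h := congrArg Subtype.val hg
  fin_cases i
  · simpa [Fin.sum_univ_three, phi, psi] using congrFun₂ (congrArg (·.2.1) h) 0 0
  · simpa [Fin.sum_univ_three, phi, psi] using congrFun₂ (congrArg (·.1) h) 1 0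
  · simpa [Fin.sum_univ_three, phi, psi] using congrFun₂ (congrArg (·.2.2) h) 1 0

theorem span_eq_top : Submodule.span k (Set.range ![1, phi lam, psi lam]) = ⊤ := by
  refine eq_top_iff.2 fun f _ => (Submodule.mem_span_range_iff_exists_fun k).2
    ⟨![(f : M₂ × M₂ × M₂).2.1 0 0, (f : M₂ × M₂ × M₂).1 1 0, (f : M₂ × M₂ × M₂).2.2 1 0], ?_⟩
  rw [Fin.sum_univ_three, add_assoc]
  exact (eq_smul_one_add f).symm

theorem finrank_eq : Module.finrank k (endTriples k lam) = 3 := by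
  simp [Module.finrank_eq_card_basis (Module.Basis.mk linearIndependent span_eq_top.ge)]

instance : IsLocalRing (endTriples k lam) :=
  .of_isNilpotent_sub_algebraMap fun f => ⟨_, isNilpotent_sub_algebraMap f⟩

theorem commute (f g : endTriples k lam) : Commute f g := by
  rw [← sub_add_cancel f (algebraMap k _ ((f : M₂ × M₂ × M₂).2.1 0 0)),
    ← sub_add_cancel g (algebraMap k _ ((g : M₂ × M₂ × M₂).2.1 0 0))]
  have hf := sub_algebraMap_mem_span f
  have hg := sub_algebraMap_mem_span g
  have hfg : Commute (f - algebraMap k _ ((f : M₂ × M₂ × M₂).2.1 0 0))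
      (g - algebraMap k _ ((g : M₂ × M₂ × M₂).2.1 0 0)) :=
    (mul_eq_zero_of_mem_span hf hg).trans (mul_eq_zero_of_mem_span hg hf).symm
  exact (hfg.add_right (Algebra.commute_algebraMap_right _ _)).add_left
    (Algebra.commute_algebraMap_left _ _)

abbrev commRing (lam : k) : CommRing (endTriples k lam) :=
  { (inferInstance : Ring (endTriples k lam)) with mul_comm := fun f g => (commute f g).eq }

def ofQuotient (lam : k) : (MvPolynomial (Fin 2) k ⧸ degTwoIdeal k) →ₐ[k] endTriples k lam :=
  letI := commRing lam
  Ideal.Quotient.liftₐ _ (aeval ![phi lam, psi lam]) fun p hp => by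
    refine (Ideal.span_le (I := RingHom.ker (aeval ![phi lam, psi lam]))).2 ?_ hp
    rintro _ (rfl | rfl | rfl) <;> simp [sq, mul_eq_zero_of_mem_pair]

theorem ofQuotient_comp :
    ofQuotient lam ∘ ![1, Ideal.Quotient.mk _ (X 0), Ideal.Quotient.mk _ (X 1)] =
      ![1, phi lam, psi lam] := by
  ext i : 1
  let _ := commRing lam
  fin_cases i
  · exact map_one _
  · exact aeval_X ![phi lam, psi lam] 0
  · exact aeval_X ![phi lam, psi lam] 1

theorem bijective_ofQuotient : Function.Bijective (ofQuotient lam) := by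
  refine ⟨LinearMap.injective_of_linearIndependent (f := (ofQuotient lam).toLinearMap)
    span_range_degTwoIdeal_quotient_eq_top ?_, ?_⟩
  · rw [AlgHom.coe_toLinearMap, ofQuotient_comp]
    exact linearIndependent
  · rw [← AlgHom.coe_toLinearMap, ← LinearMap.range_eq_top, eq_top_iff, ← span_eq_top,
      Submodule.span_le, ← ofQuotient_comp, Set.range_comp]
    exact Set.image_subset_range _ _

end endTriples

/-- For every `λ ∈ k`, the set `E_λ` of endomorphism triples of `M_λ`
is a 3-dimensional `k`-subspace of `M₂(k)³`, closed under componentwise composition,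
and the product of two triples whose middle components are not invertible is zero.
Hence `E_λ` is a local `k`-algebra, isomorphic to `k[φ,ψ]/(φ²,φψ,ψ²)`, and `M_λ` is
indecomposable. -/
theorem endTriples_local_algebra (lam : k) :
    Module.finrank k ↥(endTriples k lam) = 3 ∧
    (∀ f g : Matrix (Fin 2) (Fin 2) k × Matrix (Fin 2) (Fin 2) k × Matrix (Fin 2) (Fin 2) k,
      f ∈ endTriples k lam → g ∈ endTriples k lam → f * g ∈ endTriples k lam) ∧
    (∀ f g : ↥(endTriples k lam),
      ¬IsUnit ((f : Matrix (Fin 2) (Fin 2) k × Matrix (Fin 2) (Fin 2) k ×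
          Matrix (Fin 2) (Fin 2) k)).2.1 →
      ¬IsUnit ((g : Matrix (Fin 2) (Fin 2) k × Matrix (Fin 2) (Fin 2) k ×
          Matrix (Fin 2) (Fin 2) k)).2.1 →
      f * g = 0) ∧
    IsLocalRing ↥(endTriples k lam) ∧
    Nonempty (↥(endTriples k lam) ≃ₐ[k]
      (MvPolynomial (Fin 2) k ⧸ Ideal.span
        {(MvPolynomial.X 0 : MvPolynomial (Fin 2) k) ^ 2,
         MvPolynomial.X 0 * MvPolynomial.X 1,
         (MvPolynomial.X 1 : MvPolynomial (Fin 2) k) ^ 2})) ∧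
    (∀ f : ↥(endTriples k lam), f * f = f → f = 0 ∨ f = 1) :=
  ⟨endTriples.finrank_eq, fun _ _ => (endTriples k lam).mul_mem,
    fun _ _ hf hg => endTriples.mul_eq_zero_of_mem_span (endTriples.mem_span_of_not_isUnit hf)
      (endTriples.mem_span_of_not_isUnit hg),
    inferInstance, ⟨(AlgEquiv.ofBijective _ endTriples.bijective_ofQuotient).symm⟩,
    fun _ => IsLocalRing.eq_zero_or_eq_one_of_isIdempotentElem⟩
end
end

section
/- Let k be a field, m ≥ 1 an integer, λ ∈ k \ {0,1}, and J_λ ∈ M_m(k) the Jordan block of size m with eigenvalue λ. Consider V = k^m × k^m with the four subspaces U₁ = {(x,0) : x ∈ k^m}, U₂ = {(0,y) : y ∈ k^m}, U₃ = {(x,x) : x ∈ k^m} and U₄ = {(x, J_λ x) : x ∈ k^m}. Then every idempotent k-linear endomorphism S of V with S(Uᵢ) ⊆ Uᵢ for i = 1,2,3,4 equals 0 or the identity; that is, the corresponding representation R_λ^{(m)} of the four subspace quiver, with dimension vector (2m, m, m, m, m), is indecomposable. -/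
/-!
Invariance of `U₁` and `U₂` makes `S` block diagonal, `S = A × B`; invariance of `U₃` gives
`B = A`, and invariance of `U₄` makes `A` commute with `J_λ`, hence with the nilpotent shift
`N = J_λ - λ`. The range and the kernel of the idempotent `A` are then `N`-invariant, so each of
them, if nonzero, contains a nonzero vector of `ker N`. Since `ker N` is a line, they cannot both
be nonzero: `A = 0` or `A = 1`.
-/

set_option maxHeartbeats 1600000
set_option synthInstance.maxHeartbeats 400000

noncomputable section

/-- The `m × m` Jordan block with eigenvalue `λ`. -/
def jordanBlock (k : Type*) [Field k] (m : ℕ) (lam : k) : Matrix (Fin m) (Fin m) k :=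
  Matrix.of fun i j => if i = j then lam else if (i : ℕ) + 1 = (j : ℕ) then 1 else 0

theorem Matrix.IsUpperTriangular.isNilpotent_of_diag_eq_zero {n R : Type*} [Fintype n]
    [LinearOrder n] [CommRing R] {M : Matrix n n R} (hM : M.IsUpperTriangular)
    (hdiag : ∀ i, M i i = 0) : IsNilpotent M := by
  classical
  refine ⟨Fintype.card n, ?_⟩
  simpa [M.charpoly_of_isUpperTriangular hM, hdiag] using M.aeval_self_charpoly

namespace Module.End

variable {R M : Type*} [Semiring R] [AddCommMonoid M] [Module R M]

theorem exists_pow_apply_ne_zero_mem_ker {N : Module.End R M} (hN : IsNilpotent N) {w : M}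
    (hw : w ≠ 0) : ∃ j : ℕ, (N ^ j) w ≠ 0 ∧ (N ^ j) w ∈ LinearMap.ker N := by
  classical
  have hex : ∃ n, (N ^ n) w = 0 := by
    obtain ⟨n, hn⟩ := hN
    exact ⟨n, by simp [hn]⟩
  have hpos : Nat.find hex ≠ 0 := fun h0 => hw (by simpa [h0] using Nat.find_spec hex)
  refine ⟨Nat.find hex - 1, Nat.find_min hex (by omega), ?_⟩
  rw [LinearMap.mem_ker, ← Module.End.mul_apply, ← pow_succ', Nat.sub_add_cancel (by omega)]
  exact Nat.find_spec hex

end Module.End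

namespace IsIdempotentElem

variable {K V : Type*} [DivisionRing K] [AddCommGroup V] [Module K V]
  {P N : Module.End K V}

theorem exists_fixed_ne_zero_mem_ker_of_commute (hP : IsIdempotentElem P) (hP0 : P ≠ 0)
    (hN : IsNilpotent N) (hPN : Commute P N) :
    ∃ u, u ≠ 0 ∧ u ∈ LinearMap.ker N ∧ P u = u := by
  obtain ⟨x, hx⟩ : ∃ x, P x ≠ 0 := by
    by_contra! h
    exact hP0 (LinearMap.ext h)
  obtain ⟨j, hj0, hjker⟩ := Module.End.exists_pow_apply_ne_zero_mem_ker hN hx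
  refine ⟨(N ^ j) (P x), hj0, hjker, ?_⟩
  rw [← Module.End.mul_apply, (hPN.pow_right j).eq, Module.End.mul_apply,
    ← Module.End.mul_apply P P, hP.eq]

theorem eq_zero_or_eq_one_of_commute (hP : IsIdempotentElem P) (hN : IsNilpotent N)
    (hker : Module.rank K (LinearMap.ker N) ≤ 1) (hPN : Commute P N) : P = 0 ∨ P = 1 := by
  by_contra! h
  obtain ⟨u, hu0, huN, hPu⟩ := hP.exists_fixed_ne_zero_mem_ker_of_commute h.1 hN hPN
  obtain ⟨u', hu'0, hu'N, hPu'⟩ :=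
    hP.one_sub.exists_fixed_ne_zero_mem_ker_of_commute (sub_ne_zero.2 h.2.symm) hN
      ((Commute.one_left N).sub_left hPN)
  obtain ⟨v, hv⟩ := (rank_submodule_le_one_iff' _).1 hker
  obtain ⟨a, rfl⟩ := Submodule.mem_span_singleton.1 (hv huN)
  obtain ⟨b, rfl⟩ := Submodule.mem_span_singleton.1 (hv hu'N)
  have ha : a ≠ 0 := by rintro rfl; simp at hu0
  have hb : b ≠ 0 := by rintro rfl; simp at hu'0
  have hPv : P v = v := smul_right_injective V ha (by simpa using hPu)
  have hPv' : P v = 0 := by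
    simpa [sub_eq_self, smul_eq_zero, hb] using hPu'
  exact hu0 (by rw [← hPv, hPv', smul_zero])

end IsIdempotentElem

theorem LinearMap.exists_eq_prodMap_self_of_mapsTo {R M : Type*} [Semiring R] [AddCommMonoid M]
    [Module R M] (S : M × M →ₗ[R] M × M)
    (h₁ : ∀ p : M × M, p.2 = 0 → (S p).2 = 0) (h₂ : ∀ p : M × M, p.1 = 0 → (S p).1 = 0)
    (h₃ : ∀ p : M × M, p.1 = p.2 → (S p).1 = (S p).2) : ∃ A : M →ₗ[R] M, S = A.prodMap A := by
  have hl : ∀ x, S (x, 0) = ((S (x, 0)).1, 0) := fun x => Prod.ext rfl (h₁ _ rfl)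
  have hr : ∀ x, S (0, x) = (0, (S (0, x)).2) := fun x => Prod.ext (h₂ _ rfl) rfl
  have hdiag : ∀ x, (S (0, x)).2 = (S (x, 0)).1 := fun x => by
    have hsplit : S (x, x) = S (x, 0) + S (0, x) := by
      rw [← map_add, Prod.mk_add_mk, add_zero, zero_add]
    have h := h₃ (x, x) rfl
    rw [hsplit, Prod.fst_add, Prod.snd_add, h₁ (x, 0) rfl, h₂ (0, x) rfl, add_zero, zero_add] at h
    exact h.symm
  refine ⟨LinearMap.fst R M M ∘ₗ S ∘ₗ LinearMap.inl R M M, LinearMap.prod_ext ?_ ?_⟩ <;>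
    ext x : 1
  · simpa [← Prod.zero_eq_mk] using hl x
  · simpa [← Prod.zero_eq_mk, hdiag] using hr x

section JordanBlock

variable {k : Type*} [Field k] {m : ℕ} {lam : k}

theorem jordanBlock_sub_smul_one_apply (i j : Fin m) :
    (jordanBlock k m lam - lam • 1) i j = if (i : ℕ) + 1 = j then 1 else 0 := by
  by_cases hij : i = j
  · subst hij
    simp [jordanBlock]
  · simp [jordanBlock, hij]

theorem isNilpotent_jordanBlock_sub_smul_one : IsNilpotent (jordanBlock k m lam - lam • 1) := by
  refine Matrix.IsUpperTriangular.isNilpotent_of_diag_eq_zero (fun i j hji => ?_) fun i => ?_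
  · rw [jordanBlock_sub_smul_one_apply, if_neg]
    have : (j : ℕ) < i := hji
    omega
  · rw [jordanBlock_sub_smul_one_apply, if_neg (by omega)]

theorem rank_ker_toLin'_jordanBlock_sub_smul_one_le_one :
    Module.rank k (LinearMap.ker (Matrix.toLin' (jordanBlock k m lam - lam • 1))) ≤ 1 := by
  rw [rank_submodule_le_one_iff']
  rcases m with _ | n
  · exact ⟨0, fun x _ => by simp [Subsingleton.elim x 0]⟩
  refine ⟨Pi.single 0 1, fun x hx => Submodule.mem_span_singleton.2 ⟨x 0, funext fun j => ?_⟩⟩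
  rcases Fin.eq_zero_or_eq_succ j with rfl | ⟨i, rfl⟩
  · simp
  have hxi := congrFun (LinearMap.mem_ker.1 hx) i.castSucc
  simp only [Matrix.toLin'_apply, Matrix.mulVec, dotProduct, jordanBlock_sub_smul_one_apply,
    Fin.val_castSucc, ite_mul, one_mul, zero_mul, Pi.zero_apply] at hxi
  rw [Finset.sum_eq_single i.succ (fun j _ hj => if_neg fun h => hj (Fin.ext (by simp [h])))
    (by simp), if_pos (by simp)] at hxi
  simp [hxi, Fin.succ_ne_zero]

end JordanBlock

theorem four_subspace_representation_indecomposable_general (k : Type*) [Field k]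
    (m : ℕ) (lam : k)
    (S : ((Fin m → k) × (Fin m → k)) →ₗ[k] ((Fin m → k) × (Fin m → k)))
    (hidem : S ∘ₗ S = S)
    (hU1 : ∀ p : (Fin m → k) × (Fin m → k), p.2 = 0 → (S p).2 = 0)
    (hU2 : ∀ p : (Fin m → k) × (Fin m → k), p.1 = 0 → (S p).1 = 0)
    (hU3 : ∀ p : (Fin m → k) × (Fin m → k), p.1 = p.2 → (S p).1 = (S p).2)
    (hU4 : ∀ p : (Fin m → k) × (Fin m → k),
      p.2 = (jordanBlock k m lam).mulVec p.1 →
      (S p).2 = (jordanBlock k m lam).mulVec (S p).1) :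
    S = 0 ∨ S = LinearMap.id := by
  obtain ⟨A, rfl⟩ := S.exists_eq_prodMap_self_of_mapsTo hU1 hU2 hU3
  have hA : IsIdempotentElem A := LinearMap.ext fun x => by
    simpa using congrArg Prod.fst (LinearMap.congr_fun hidem (x, 0))
  have hAJ : Commute A (Matrix.toLin' (jordanBlock k m lam)) := LinearMap.ext fun x => by
    simpa using hU4 (x, (jordanBlock k m lam).mulVec x) rfl
  have hAN : Commute A (Matrix.toLin' (jordanBlock k m lam - lam • 1)) := by
    rw [map_sub, map_smul, Matrix.toLin'_one]
    exact hAJ.sub_right ((Commute.one_right A).smul_right lam)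
  rcases hA.eq_zero_or_eq_one_of_commute
      (isNilpotent_jordanBlock_sub_smul_one.map Matrix.toLinAlgEquiv')
      rank_ker_toLin'_jordanBlock_sub_smul_one_le_one hAN with rfl | rfl
  · exact Or.inl LinearMap.prodMap_zero
  · exact Or.inr LinearMap.prodMap_id

/-- Let `m ≥ 1`, `λ ∈ k \ {0,1}`, and consider
`V = k^m × k^m` with the four subspaces `U₁ = {(x,0)}`, `U₂ = {(0,y)}`,
`U₃ = {(x,x)}` and `U₄ = {(x, J_λ x)}`.  Every idempotent `k`-linear endomorphism `S`
of `V` preserving all four subspaces is `0` or the identity; i.e. the corresponding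
representation `R_λ^{(m)}` of the four subspace quiver (with dimension vector
`(2m, m, m, m, m)`) is indecomposable. -/
theorem four_subspace_representation_indecomposable (k : Type*) [Field k]
    (m : ℕ) (hm : 1 ≤ m) (lam : k) (h0 : lam ≠ 0) (h1 : lam ≠ 1)
    (S : ((Fin m → k) × (Fin m → k)) →ₗ[k] ((Fin m → k) × (Fin m → k)))
    (hidem : S ∘ₗ S = S)
    (hU1 : ∀ p : (Fin m → k) × (Fin m → k), p.2 = 0 → (S p).2 = 0)
    (hU2 : ∀ p : (Fin m → k) × (Fin m → k), p.1 = 0 → (S p).1 = 0)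
    (hU3 : ∀ p : (Fin m → k) × (Fin m → k), p.1 = p.2 → (S p).1 = (S p).2)
    (hU4 : ∀ p : (Fin m → k) × (Fin m → k),
      p.2 = (jordanBlock k m lam).mulVec p.1 →
      (S p).2 = (jordanBlock k m lam).mulVec (S p).1) :
    S = 0 ∨ S = LinearMap.id :=
  four_subspace_representation_indecomposable_general k m lam S hidem hU1 hU2 hU3 hU4
end
end

section
/- Let C be an additive category with the Krull–Remak–Schmidt property (every object is a finite biproduct of objects with local endomorphism rings), D an additive category, and F : C → D an additive functor that is full and essentially surjective. Suppose K is a class of objects of C, closed under isomorphism, finite biproducts and direct summands, such that for every morphism f of C one has F(f) = 0 if and only if f factors through some object of K. Let C_K be the full subcategory of C consisting of the objects having no nonzero direct summand in K. Then the restriction of F to C_K is a detecting functor: it is full, essentially surjective, and reflects isomorphisms (any morphism α in C_K with F(α) an isomorphism is itself an isomorphism). -/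
/-!
If `X` is a finite biproduct of objects with local endomorphism rings, none of which `F` kills,
then `𝟙 X + n` is invertible for every `n : X ⟶ X` with `F n = 0`: on one local summand because
such an `n` is not a unit, and on a biproduct by Gaussian elimination of the `2 × 2` block
matrix. A full `F` therefore reflects isomorphisms between such objects. Objects of `C_K` are of
this kind: a local summand killed by `F` is a retract of an object of `K`, hence by locality
isomorphic to one of the local summands of that object, hence in `K`. For essential
surjectivity, drop from a preimage the local summands lying in `K`; `F` kills them, and what
remains lies in `C_K` because an idempotent on it that `F` kills must vanish.
-/

open CategoryTheory CategoryTheory.Limits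

namespace CategoryTheory.Limits

variable {C : Type*} [Category C] [Preadditive C]

theorem biproduct.isZero_of_isEmpty {J : Type} [Finite J] [IsEmpty J] (f : J → C)
    [HasBiproduct f] : IsZero (⨁ f) := by
  have := Fintype.ofFinite J
  rw [IsZero.iff_id_eq_zero, ← biproduct.total]
  simp

variable [HasFiniteBiproducts C] [HasBinaryBiproducts C]

noncomputable def biproduct.isoBiprodSubtype {J : Type} [Finite J] (f : J → C) (p : J → Prop)
    [DecidablePred p] :
    ⨁ f ≅ (⨁ Subtype.restrict p f) ⊞ ⨁ Subtype.restrict (fun j => ¬p j) f :=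
  biprod.uniqueUpToIso _ _ <| isBinaryBilimitOfTotal
    { pt := ⨁ f
      fst := biproduct.toSubtype f p
      snd := biproduct.toSubtype f _
      inl := biproduct.fromSubtype f p
      inr := biproduct.fromSubtype f _
      inl_snd := by
        refine biproduct.hom_ext' _ _ fun k => biproduct.hom_ext _ _ fun j => ?_
        simp only [Category.assoc, biproduct.toSubtype_π, zero_comp, comp_zero]
        erw [biproduct.ι_fromSubtype_assoc]
        exact biproduct.ι_π_ne f fun h => j.2 (h ▸ k.2)
      inr_fst := by
        refine biproduct.hom_ext' _ _ fun k => biproduct.hom_ext _ _ fun j => ?_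
        simp only [Category.assoc, biproduct.toSubtype_π, zero_comp, comp_zero]
        erw [biproduct.ι_fromSubtype_assoc]
        exact biproduct.ι_π_ne f fun h => k.2 (h ▸ j.2) }
    (by
      ext j k
      by_cases hj : p j <;> simp [hj])

noncomputable def biproduct.isoBiprodNe {J : Type} [Finite J] [DecidableEq J] (f : J → C)
    (j : J) : ⨁ f ≅ f j ⊞ ⨁ Subtype.restrict (fun i => i ≠ j) f :=
  biproduct.isoBiprodSubtype f (· = j) ≪≫ biprod.mapIso (biproductUniqueIso _) (Iso.refl _)

theorem biproduct_induction {P : C → Prop} (of_iso : ∀ {X Y : C}, (X ≅ Y) → P X → P Y)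
    (of_isZero : ∀ {X : C}, IsZero X → P X) (biprod : ∀ {X Y : C}, P X → P Y → P (X ⊞ Y))
    {J : Type} [Finite J] (f : J → C) (hf : ∀ j, P (f j)) : P (⨁ f) := by
  classical
  induction h : Nat.card J generalizing J with
  | zero =>
    have : IsEmpty J := Finite.card_eq_zero_iff.mp h
    exact of_isZero (biproduct.isZero_of_isEmpty f)
  | succ n ih =>
    obtain ⟨j⟩ : Nonempty J := (Nat.card_pos_iff.mp (by omega)).1
    have hcard : Nat.card {i // i ≠ j} = n := by
      have := Fintype.ofFinite J
      simp [Nat.card_eq_fintype_card, Fintype.card_subtype_compl] at h ⊢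
      omega
    exact of_iso (biproduct.isoBiprodNe f j).symm (biprod (hf j) (ih _ (fun i => hf i) hcard))

end CategoryTheory.Limits

namespace CategoryTheory

variable {C : Type*} [Category C] [Preadditive C]

theorem Biprod.isIso_ofComponents [HasBinaryBiproducts C] {X₁ X₂ Y₁ Y₂ : C} (f₁₁ : X₁ ⟶ Y₁)
    (f₁₂ : X₁ ⟶ Y₂) (f₂₁ : X₂ ⟶ Y₁) (f₂₂ : X₂ ⟶ Y₂) [IsIso f₁₁]
    [IsIso (f₂₂ - f₂₁ ≫ inv f₁₁ ≫ f₁₂)] : IsIso (Biprod.ofComponents f₁₁ f₁₂ f₂₁ f₂₂) := by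
  set L := Biprod.unipotentLower (-f₂₁ ≫ inv f₁₁)
  set R := Biprod.unipotentUpper (-inv f₁₁ ≫ f₁₂)
  set D := biprod.mapIso (asIso f₁₁) (asIso (f₂₂ - f₂₁ ≫ inv f₁₁ ≫ f₁₂))
  have hdiag : L.hom ≫ Biprod.ofComponents f₁₁ f₁₂ f₂₁ f₂₂ ≫ R.hom = D.hom :=
    (Biprod.gaussian' f₁₁ f₁₂ f₂₁ f₂₂).2.2.2
  have hfac : Biprod.ofComponents f₁₁ f₁₂ f₂₁ f₂₂ = L.inv ≫ D.hom ≫ R.inv := by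
    simp [← hdiag]
  rw [hfac]
  infer_instance

theorem not_isZero_of_nontrivial_end {X : C} [Nontrivial (End X)] : ¬IsZero X :=
  fun hX => one_ne_zero (α := End X) (hX.eq_of_src _ _)

theorem Retract.isIso_i_of_isLocalRing {X Y : C} (h : Retract X Y) [IsLocalRing (End Y)]
    (hX : ¬IsZero X) : IsIso h.i := by
  rcases IsLocalRing.isUnit_or_isUnit_of_add_one (R := End Y) (a := h.r ≫ h.i)
    (b := 𝟙 Y - h.r ≫ h.i) (add_sub_cancel _ _) with hu | hu
  · have : IsIso (h.r ≫ h.i) := (isUnit_iff_isIso _).mp hu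
    have : Epi h.i := epi_of_epi h.r h.i
    exact isIso_of_epi_of_isSplitMono h.i
  · have : IsIso (𝟙 Y - h.r ≫ h.i) := (isUnit_iff_isIso _).mp hu
    have hi : h.i = 0 := by
      rw [← cancel_mono (𝟙 Y - h.r ≫ h.i)]
      simp [Preadditive.comp_sub]
    exact absurd (by rw [IsZero.iff_id_eq_zero, ← h.retract, hi, zero_comp]) hX

theorem exists_retract_of_retract_biproduct {X : C} [IsLocalRing (End X)] {J : Type}
    [Fintype J] {f : J → C} [HasBiproduct f] (h : Retract X (⨁ f)) :
    ∃ j, Nonempty (Retract X (f j)) := by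
  have hsum : ∑ j, (h.i ≫ biproduct.π f j) ≫ (biproduct.ι f j ≫ h.r) = (1 : End X) :=
    calc _ = h.i ≫ (∑ j, biproduct.π f j ≫ biproduct.ι f j) ≫ h.r := by
          simp only [Preadditive.sum_comp, Preadditive.comp_sum, Category.assoc]
      _ = 𝟙 X := by simp
  obtain ⟨j, -, hj⟩ := IsLocalRing.exists_of_isUnit_sum (hsum ▸ isUnit_one)
  have : IsIso ((h.i ≫ biproduct.π f j) ≫ (biproduct.ι f j ≫ h.r)) := (isUnit_iff_isIso _).mp hj
  refine ⟨j, ⟨h.i ≫ biproduct.π f j, (biproduct.ι f j ≫ h.r) ≫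
    inv ((h.i ≫ biproduct.π f j) ≫ (biproduct.ι f j ≫ h.r)), ?_⟩⟩
  rw [← Category.assoc, IsIso.hom_inv_id]

def HasLocalDecomposition [HasFiniteBiproducts C] (X : C) : Prop :=
  ∃ (n : ℕ) (f : Fin n → C), (∀ i, IsLocalRing (End (f i))) ∧ Nonempty (X ≅ ⨁ f)

theorem mem_of_retract_of_isLocalRing [HasFiniteBiproducts C] [HasBinaryBiproducts C]
    {K : Set C} (hK_iso : ∀ ⦃X Y : C⦄, (X ≅ Y) → X ∈ K → Y ∈ K)
    (hK_summand : ∀ ⦃X Y : C⦄, (X ⊞ Y) ∈ K → X ∈ K) {X Z : C} [IsLocalRing (End X)]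
    (hZ : HasLocalDecomposition Z) (hZK : Z ∈ K) (h : Retract X Z) : X ∈ K := by
  classical
  obtain ⟨n, f, hf, ⟨e⟩⟩ := hZ
  obtain ⟨j, ⟨h'⟩⟩ := exists_retract_of_retract_biproduct (h.trans (.ofIso e))
  have := hf j
  have := h'.isIso_i_of_isLocalRing not_isZero_of_nontrivial_end
  exact hK_iso (asIso h'.i).symm (hK_summand (hK_iso (e ≪≫ biproduct.isoBiprodNe f j) hZK))

variable {D : Type*} [Category D] [Preadditive D] {F : C ⥤ D}

variable (F) in
/-- For additive `F` this says that the endomorphisms of `X` killed by `F`, which form a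
two-sided ideal of `End X`, lie in its Jacobson radical. -/
def Functor.KernelInRadical (X : C) : Prop :=
  ∀ n : X ⟶ X, F.map n = 0 → IsIso (𝟙 X + n)

theorem Functor.kernelInRadical_of_isZero {X : C} (hX : IsZero X) : F.KernelInRadical X :=
  fun n _ => by
    rw [hX.eq_of_src (𝟙 X + n) (𝟙 X)]
    infer_instance

theorem Functor.kernelInRadical_of_isLocalRing {X : C} [IsLocalRing (End X)]
    (hX : ¬IsZero (F.obj X)) : F.KernelInRadical X := by
  intro n hn
  rcases IsLocalRing.isUnit_or_isUnit_of_add_one (R := End X) (a := 𝟙 X + n) (b := -n)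
    (add_neg_cancel_right _ _) with h | h
  · exact (isUnit_iff_isIso _).mp h
  · have : IsIso n := (isUnit_iff_isIso _).mp ((IsUnit.neg_iff _).mp h)
    have : Mono (F.map n) := inferInstance
    rw [hn] at this
    exact absurd (IsZero.of_mono_zero _ (F.obj X)) hX

theorem Functor.KernelInRadical.of_iso {X Y : C} (h : F.KernelInRadical X) (e : X ≅ Y) :
    F.KernelInRadical Y := by
  intro n hn
  have := h (e.hom ≫ n ≫ e.inv) (by simp [hn])
  have hconj : 𝟙 Y + n = e.inv ≫ (𝟙 X + e.hom ≫ n ≫ e.inv) ≫ e.hom := by simp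
  rw [hconj]
  infer_instance

variable [F.Additive]

theorem Functor.KernelInRadical.biprod [HasBinaryBiproducts C] {X₁ X₂ : C}
    (h₁ : F.KernelInRadical X₁) (h₂ : F.KernelInRadical X₂) : F.KernelInRadical (X₁ ⊞ X₂) := by
  intro n hn
  have hF : ∀ {A B : C} (i : A ⟶ X₁ ⊞ X₂) (p : X₁ ⊞ X₂ ⟶ B), F.map (i ≫ n ≫ p) = 0 := by
    simp [hn]
  set n₁₁ := biprod.inl ≫ n ≫ biprod.fst
  set n₁₂ := biprod.inl ≫ n ≫ biprod.snd
  set n₂₁ := biprod.inr ≫ n ≫ biprod.fst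
  set n₂₂ := biprod.inr ≫ n ≫ biprod.snd
  have : IsIso (𝟙 X₁ + n₁₁) := h₁ _ (hF _ _)
  have : IsIso ((𝟙 X₂ + n₂₂) - n₂₁ ≫ CategoryTheory.inv (𝟙 X₁ + n₁₁) ≫ n₁₂) := by
    rw [add_sub_assoc]
    exact h₂ _ (by simp [n₂₁, n₂₂, hF])
  have hcomp : 𝟙 (X₁ ⊞ X₂) + n = Biprod.ofComponents (𝟙 X₁ + n₁₁) n₁₂ n₂₁ (𝟙 X₂ + n₂₂) := by
    ext <;> simp [n₁₁, n₁₂, n₂₁, n₂₂]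
  rw [hcomp]
  exact Biprod.isIso_ofComponents _ _ _ _

theorem Functor.kernelInRadical_biproduct [HasFiniteBiproducts C] [HasBinaryBiproducts C]
    {J : Type} [Finite J] (f : J → C) (hf : ∀ j, F.KernelInRadical (f j)) :
    F.KernelInRadical (⨁ f) :=
  biproduct_induction (fun e h => h.of_iso e) kernelInRadical_of_isZero
    (fun h₁ h₂ => h₁.biprod h₂) f hf

theorem Functor.KernelInRadical.isIso_of_isIso_map [F.Full] {X Y : C}
    (hX : F.KernelInRadical X) (hY : F.KernelInRadical Y) (α : X ⟶ Y) [IsIso (F.map α)] :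
    IsIso α := by
  obtain ⟨β, hβ⟩ := F.map_surjective (CategoryTheory.inv (F.map α))
  have : IsIso (α ≫ β) := by simpa using hX (α ≫ β - 𝟙 X) (by simp [hβ])
  have : IsIso (β ≫ α) := by simpa using hY (β ≫ α - 𝟙 Y) (by simp [hβ])
  have : IsSplitEpi α := ⟨⟨CategoryTheory.inv (β ≫ α) ≫ β, by simp⟩⟩
  have : Mono α := mono_of_mono α β
  exact isIso_of_mono_of_isSplitEpi α

theorem Functor.KernelInRadical.isZero_of_iso_biprod [HasBinaryBiproducts C] {X A B : C}
    (h : F.KernelInRadical X) (e : X ≅ A ⊞ B) (hA : IsZero (F.obj A)) : IsZero A := by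
  set q := e.hom ≫ biprod.fst ≫ biprod.inl ≫ e.inv
  have : IsIso (𝟙 X - q) := by
    simpa [← sub_eq_add_neg] using h (-q) (by simp [q, hA.eq_of_tgt (F.map biprod.fst) 0])
  have hq : q = 0 := by
    rw [← cancel_epi (𝟙 X - q)]
    simp [q, Preadditive.sub_comp]
  rw [IsZero.iff_id_eq_zero]
  calc 𝟙 A = biprod.inl ≫ e.inv ≫ q ≫ e.hom ≫ biprod.fst := by simp [q]
    _ = 0 := by simp [hq]

theorem Functor.isZero_map_biproduct {J : Type} [Fintype J] {f : J → C} [HasBiproduct f]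
    (hf : ∀ j, IsZero (F.obj (f j))) : IsZero (F.obj (⨁ f)) := by
  rw [IsZero.iff_id_eq_zero, ← F.map_id, ← biproduct.total, F.map_sum]
  refine Finset.sum_eq_zero fun j _ => ?_
  rw [F.map_comp, (hf j).eq_of_tgt (F.map (biproduct.π f j)) 0, zero_comp]

theorem Functor.isIso_map_biprod_inl [HasBinaryBiproducts C] {X Y : C}
    (hY : IsZero (F.obj Y)) : IsIso (F.map (biprod.inl : X ⟶ X ⊞ Y)) := by
  refine ⟨F.map biprod.fst, by simp [← F.map_comp], ?_⟩
  rw [← F.map_comp, ← sub_eq_iff_eq_add.mpr biprod.total.symm, F.map_sub, F.map_comp,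
    hY.eq_of_tgt (F.map biprod.snd) 0]
  simp

end CategoryTheory

theorem detecting_restriction_of_full_essSurj_general
    (C : Type*) [Category C] (D : Type*) [Category D]
    [Preadditive C] [Preadditive D] [HasFiniteBiproducts C]
    [CategoryTheory.Limits.HasBinaryBiproducts C]
    (F : C ⥤ D) [F.Additive] [F.Full] [F.EssSurj]
    (hKRS : ∀ X : C, ∃ (n : ℕ) (f : Fin n → C),
      (∀ i, IsLocalRing (End (f i))) ∧ Nonempty (X ≅ ⨁ f))
    (K : Set C)
    (hK_iso : ∀ ⦃X Y : C⦄, (X ≅ Y) → X ∈ K → Y ∈ K)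
    (hK_summand : ∀ ⦃X Y : C⦄, (X ⊞ Y) ∈ K → X ∈ K)
    (hker : ∀ ⦃X Y : C⦄ (f : X ⟶ Y),
      F.map f = 0 ↔ ∃ Z : C, Z ∈ K ∧ ∃ (u : X ⟶ Z) (v : Z ⟶ Y), f = u ≫ v) :
    (∀ X Y : C,
      (∀ A B : C, (X ≅ A ⊞ B) → A ∈ K → IsZero A) →
      (∀ A B : C, (Y ≅ A ⊞ B) → A ∈ K → IsZero A) →
      ∀ g : F.obj X ⟶ F.obj Y, ∃ φ : X ⟶ Y, F.map φ = g) ∧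
    (∀ d : D, ∃ X : C,
      (∀ A B : C, (X ≅ A ⊞ B) → A ∈ K → IsZero A) ∧ Nonempty (F.obj X ≅ d)) ∧
    (∀ X Y : C,
      (∀ A B : C, (X ≅ A ⊞ B) → A ∈ K → IsZero A) →
      (∀ A B : C, (Y ≅ A ⊞ B) → A ∈ K → IsZero A) →
      ∀ α : X ⟶ Y, IsIso (F.map α) → IsIso α) := by
  classical
  have hK_map : ∀ A ∈ K, IsZero (F.obj A) := fun A hA => by
    rw [IsZero.iff_id_eq_zero, ← F.map_id, hker]
    exact ⟨A, hA, 𝟙 A, 𝟙 A, by simp⟩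
  have hrad : ∀ {J : Type} [Finite J] (f : J → C), (∀ j, IsLocalRing (End (f j))) →
      (∀ j, f j ∉ K) → F.KernelInRadical (⨁ f) := by
    refine fun f hf hK => Functor.kernelInRadical_biproduct f fun j => ?_
    have := hf j
    refine Functor.kernelInRadical_of_isLocalRing fun h => hK j ?_
    obtain ⟨Z, hZ, u, v, huv⟩ := (hker (𝟙 (f j))).mp (by simp [h.eq_of_src (𝟙 _) 0])
    exact mem_of_retract_of_isLocalRing hK_iso hK_summand (hKRS Z) hZ ⟨u, v, huv.symm⟩
  refine ⟨fun X Y _ _ g => F.map_surjective g, fun d => ?_, fun X Y hX hY α _ => ?_⟩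
  · obtain ⟨n, f, hf, ⟨e⟩⟩ := hKRS (F.objPreimage d)
    let e' := e ≪≫ biproduct.isoBiprodSubtype f (fun i => f i ∉ K)
    have hzero : IsZero (F.obj (⨁ Subtype.restrict (fun i => ¬f i ∉ K) f)) :=
      Functor.isZero_map_biproduct fun j => hK_map _ (not_not.mp j.2)
    have := Functor.isIso_map_biprod_inl (X := ⨁ Subtype.restrict (fun i => f i ∉ K) f) hzero
    refine ⟨_, fun A B eA hA => ?_,
      ⟨asIso (F.map biprod.inl) ≪≫ F.mapIso e'.symm ≪≫ F.objObjPreimageIso d⟩⟩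
    exact (hrad (Subtype.restrict _ f) (fun j => hf j.1) (fun j => j.2)).isZero_of_iso_biprod eA
      (hK_map A hA)
  · have hCK : ∀ X : C, (∀ A B : C, (X ≅ A ⊞ B) → A ∈ K → IsZero A) → F.KernelInRadical X := by
      intro X hX
      obtain ⟨n, f, hf, ⟨e⟩⟩ := hKRS X
      refine (hrad f hf fun i hi => ?_).of_iso e.symm
      have := hf i
      exact not_isZero_of_nontrivial_end (hX _ _ (e ≪≫ biproduct.isoBiprodNe f i) hi)
    exact (hCK X hX).isIso_of_isIso_map (hCK Y hY) α

/-- Let `C` be an additive category with the Krull–Remak–Schmidt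
property, `D` an additive category, and `F : C → D` an additive functor which is full
and essentially surjective.  Suppose `K` is a class of objects of `C`, closed under
isomorphism, finite biproducts and direct summands, such that `F f = 0` iff `f`
factors through an object of `K`.  Then the restriction of `F` to the full
subcategory `C_K` of objects with no nonzero direct summand in `K` is a detecting
functor: full, essentially surjective, and isomorphism-reflecting. -/
theorem detecting_restriction_of_full_essSurj
    (C : Type*) [Category C] (D : Type*) [Category D]
    [Preadditive C] [Preadditive D] [HasFiniteBiproducts C]
    [CategoryTheory.Limits.HasBinaryBiproducts C]
    (F : C ⥤ D) [F.Additive] [F.Full] [F.EssSurj]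
    (hKRS : ∀ X : C, ∃ (n : ℕ) (f : Fin n → C),
      (∀ i, IsLocalRing (End (f i))) ∧ Nonempty (X ≅ ⨁ f))
    (K : Set C)
    (hK_iso : ∀ ⦃X Y : C⦄, (X ≅ Y) → X ∈ K → Y ∈ K)
    (hK_biprod : ∀ ⦃X Y : C⦄, X ∈ K → Y ∈ K → (X ⊞ Y) ∈ K)
    (hK_summand : ∀ ⦃X Y : C⦄, (X ⊞ Y) ∈ K → X ∈ K)
    (hker : ∀ ⦃X Y : C⦄ (f : X ⟶ Y),
      F.map f = 0 ↔ ∃ Z : C, Z ∈ K ∧ ∃ (u : X ⟶ Z) (v : Z ⟶ Y), f = u ≫ v) :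
    (∀ X Y : C,
      (∀ A B : C, (X ≅ A ⊞ B) → A ∈ K → IsZero A) →
      (∀ A B : C, (Y ≅ A ⊞ B) → A ∈ K → IsZero A) →
      ∀ g : F.obj X ⟶ F.obj Y, ∃ φ : X ⟶ Y, F.map φ = g) ∧
    (∀ d : D, ∃ X : C,
      (∀ A B : C, (X ≅ A ⊞ B) → A ∈ K → IsZero A) ∧ Nonempty (F.obj X ≅ d)) ∧
    (∀ X Y : C,
      (∀ A B : C, (X ≅ A ⊞ B) → A ∈ K → IsZero A) →
      (∀ A B : C, (Y ≅ A ⊞ B) → A ∈ K → IsZero A) →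
      ∀ α : X ⟶ Y, IsIso (F.map α) → IsIso α) :=
  detecting_restriction_of_full_essSurj_general C D F hKRS K hK_iso hK_summand hker
end
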